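/- arXiv:1010.5626 — 6 statements merged into one kernel-verified Lean document; each statement's English description precedes it below -/
import Mathlib

section
/- There exists a universal constant K > 0 such that the following holds for all positive integers n and l, all M > 0, all sets 𝔛, all points x = (x₁,…,xₙ) ∈ 𝔛ⁿ, and all families of functions {φ_θ : 𝔛 → ℝ, θ ∈ Θ}: if there is a constant A ≥ 0 with d(θ,θ') ≤ √n · A · ‖θ − θ'‖₂ for all θ, θ' ∈ Θ, then for every θ₀ ∈ Θ one has E sup_{θ∈Θ} |X_θ| ≤ E|X_{θ₀}| + K · √(n · log(l+1)) · log(n+1) · A · M. -/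
open MeasureTheory ProbabilityTheory Real ENNReal

/-!
Integrals against the Rademacher vector `ε` are averages over the Boolean cube, on which
`X_θ = ⟪signVec s, Φ θ⟫` with `Φ θ = (φ_θ(xᵢ))ᵢ`. We chain over finitely many levels: level `0`
is `{θ₀}`, and level `k ≥ 1` is Maurey's net of averages of `4ᵏ` vertices `±M eⱼ` of the
`ℓ¹`-ball, which is `2M/2ᵏ`-dense in `ℓ²` and has at most `(2l)^(4ᵏ)` points. The contraction
hypothesis carries these nets over to the vectors `Φ θ`; the increments of each level are
controlled by the sub-Gaussian maximal inequality `σ √(2 log (2 |D|))`, which gives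
`O(√(n log (l+1)) A M)` per level, and after `log₂ n + 1` levels the remainder is at most `2AM`
by Cauchy–Schwarz.
-/

open Finset
open scoped BigOperators RealInnerProductSpace

def boolSign (b : Bool) : ℝ := if b then 1 else -1

@[simp] lemma boolSign_true : boolSign true = 1 := rfl

@[simp] lemma boolSign_false : boolSign false = -1 := rfl

lemma abs_boolSign (b : Bool) : |boolSign b| = 1 := by cases b <;> simp

lemma boolSign_sq (b : Bool) : boolSign b ^ 2 = 1 := by cases b <;> simp

lemma exp_expect_le_expect_exp {α : Type*} [Fintype α] [Nonempty α] (f : α → ℝ) :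
    exp (𝔼 a, f a) ≤ 𝔼 a, exp (f a) := by
  set m := 𝔼 a, f a
  -- `exp` lies above its tangent line at the mean `m`.
  calc exp m = 𝔼 a, exp m * (f a - m + 1) := by
        rw [← mul_expect, expect_add_distrib, expect_sub_distrib, Fintype.expect_const,
          Fintype.expect_const]
        ring
    _ ≤ 𝔼 a, exp (f a) := expect_le_expect fun a _ => by
        calc exp m * (f a - m + 1) ≤ exp m * exp (f a - m) := by gcongr; exact add_one_le_exp _
          _ = exp (f a) := by rw [← exp_add]; ring_nf

lemma expect_prod_eq_prod_expect {ι κ : Type*} [Fintype ι] [DecidableEq ι] [Fintype κ]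
    (f : ι → κ → ℝ) :
    𝔼 s : ι → κ, ∏ i, f i (s i) = ∏ i, 𝔼 b, f i b := by
  simp only [Fintype.expect_eq_sum_div_card]
  rw [← Fintype.prod_sum, Fintype.card_fun, Nat.cast_pow, Finset.prod_div_distrib, prod_const,
    card_univ]

section SignVector

variable {ι : Type*} [Fintype ι]

def signVec (s : ι → Bool) : EuclideanSpace ℝ ι := WithLp.toLp 2 fun i => boolSign (s i)

lemma inner_signVec (s : ι → Bool) (v : EuclideanSpace ℝ ι) :
    ⟪signVec s, v⟫ = ∑ i, boolSign (s i) * v i := by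
  simp [signVec, PiLp.inner_apply, mul_comm]

lemma norm_signVec (s : ι → Bool) : ‖signVec s‖ = √(Fintype.card ι) := by
  simp [EuclideanSpace.norm_eq, signVec, boolSign_sq]

lemma abs_inner_signVec_le (s : ι → Bool) (v : EuclideanSpace ℝ ι) :
    |⟪signVec s, v⟫| ≤ √(Fintype.card ι) * ‖v‖ :=
  norm_signVec s ▸ abs_real_inner_le_norm _ _

variable [DecidableEq ι]

lemma expect_exp_inner_signVec_le (v : EuclideanSpace ℝ ι) :
    𝔼 s, exp ⟪signVec s, v⟫ ≤ exp (‖v‖ ^ 2 / 2) := by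
  simp_rw [inner_signVec, exp_sum]
  rw [expect_prod_eq_prod_expect (fun i b => exp (boolSign b * v i)),
    EuclideanSpace.real_norm_sq_eq, sum_div, exp_sum]
  refine prod_le_prod (fun i _ => expect_nonneg fun b _ => (exp_pos _).le) fun i _ => ?_
  calc 𝔼 b, exp (boolSign b * v i) = cosh (v i) := by
        rw [Fintype.expect_eq_sum_div_card, Fintype.sum_bool, cosh_eq]
        simp
    _ ≤ exp (v i ^ 2 / 2) := cosh_le_exp_half_sq _

lemma mul_expect_sup'_inner_signVec_le {D : Finset (EuclideanSpace ℝ ι)} (hD : D.Nonempty)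
    {σ : ℝ} (hσ : ∀ v ∈ D, ‖v‖ ≤ σ) {t : ℝ} (ht : 0 < t) :
    t * 𝔼 s, D.sup' hD (fun v => ⟪signVec s, v⟫) ≤ Real.log #D + t ^ 2 * σ ^ 2 / 2 := by
  have hpoint : ∀ s, exp (t * D.sup' hD (fun v => ⟪signVec s, v⟫))
      ≤ ∑ v ∈ D, exp ⟪signVec s, t • v⟫ := by
    intro s
    obtain ⟨v, hv, hmax⟩ := exists_mem_eq_sup' hD fun v => ⟪signVec s, v⟫
    rw [hmax, ← inner_smul_right]
    exact single_le_sum (f := fun v => exp ⟪signVec s, t • v⟫) (fun _ _ => (exp_pos _).le) hv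
  have hterm : ∀ v ∈ D, 𝔼 s, exp ⟪signVec s, t • v⟫ ≤ exp (t ^ 2 * σ ^ 2 / 2) := by
    intro v hv
    refine (expect_exp_inner_signVec_le _).trans (exp_le_exp.2 ?_)
    rw [norm_smul, mul_pow, Real.norm_of_nonneg ht.le]
    gcongr
    exact hσ v hv
  have hexp : exp (t * 𝔼 s, D.sup' hD (fun v => ⟪signVec s, v⟫))
      ≤ #D * exp (t ^ 2 * σ ^ 2 / 2) := by
    calc _ = exp (𝔼 s, t * D.sup' hD (fun v => ⟪signVec s, v⟫)) := by rw [mul_expect]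
      _ ≤ 𝔼 s, exp (t * D.sup' hD (fun v => ⟪signVec s, v⟫)) := exp_expect_le_expect_exp _
      _ ≤ 𝔼 s, ∑ v ∈ D, exp ⟪signVec s, t • v⟫ := expect_le_expect fun s _ => hpoint s
      _ = ∑ v ∈ D, 𝔼 s, exp ⟪signVec s, t • v⟫ := expect_sum_comm _ _ _
      _ ≤ ∑ _v ∈ D, exp (t ^ 2 * σ ^ 2 / 2) := sum_le_sum hterm
      _ = #D * exp (t ^ 2 * σ ^ 2 / 2) := by rw [sum_const, nsmul_eq_mul]
  have hcard : (0 : ℝ) < #D := by exact_mod_cast hD.card_pos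
  calc _ = Real.log (exp (t * 𝔼 s, D.sup' hD (fun v => ⟪signVec s, v⟫))) :=
        (Real.log_exp _).symm
    _ ≤ Real.log (#D * exp (t ^ 2 * σ ^ 2 / 2)) := Real.log_le_log (exp_pos _) hexp
    _ = Real.log #D + t ^ 2 * σ ^ 2 / 2 := by
        rw [Real.log_mul hcard.ne' (exp_pos _).ne', Real.log_exp]

lemma expect_sup'_abs_inner_signVec_le {D : Finset (EuclideanSpace ℝ ι)} (hD : D.Nonempty)
    {σ : ℝ} (hσ0 : 0 ≤ σ) (hσ : ∀ v ∈ D, ‖v‖ ≤ σ) :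
    𝔼 s, D.sup' hD (fun v => |⟪signVec s, v⟫|) ≤ σ * √(2 * Real.log (2 * #D)) := by
  classical
  rcases hσ0.eq_or_lt with rfl | hσpos
  · refine (expect_le_expect fun s _ => sup'_le hD _ fun v hv => ?_).trans
      (Fintype.expect_const (0 : ℝ)).le |>.trans (by simp)
    simp [norm_le_zero_iff.1 (hσ v hv)]
  -- `|x| = max x (-x)`: pass to the symmetrised family `D ∪ -D`.
  set J := D ∪ D.image Neg.neg
  have hJ : J.Nonempty := hD.mono subset_union_left
  have hJσ : ∀ w ∈ J, ‖w‖ ≤ σ := by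
    simp only [J, mem_union, mem_image]
    rintro w (hw | ⟨v, hv, rfl⟩)
    exacts [hσ w hw, (norm_neg v).le.trans (hσ v hv)]
  have habs : ∀ s,
      D.sup' hD (fun v => |⟪signVec s, v⟫|) ≤ J.sup' hJ (fun w => ⟪signVec s, w⟫) :=
    fun s => sup'_le hD _ fun v hv => abs_le'.2
      ⟨le_sup'_of_le _ (mem_union_left _ hv) le_rfl,
        le_sup'_of_le _ (mem_union_right _ (mem_image_of_mem _ hv)) (inner_neg_right _ _).ge⟩
  set L := Real.log (2 * #D)
  have hL : 0 < L := Real.log_pos (by have := hD.card_pos; norm_cast; omega)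
  have hcardJ : #J ≤ 2 * #D :=
    (card_union_le _ _).trans (by rw [two_mul]; exact Nat.add_le_add_left card_image_le _)
  have hLJ : Real.log #J ≤ L :=
    Real.log_le_log (by exact_mod_cast hJ.card_pos) (by exact_mod_cast hcardJ)
  set t := √(2 * L) / σ
  have ht : 0 < t := div_pos (by positivity) hσpos
  have htσ : t * σ = √(2 * L) := div_mul_cancel₀ _ hσpos.ne'
  have hsq : √(2 * L) ^ 2 = 2 * L := sq_sqrt (by positivity)
  refine le_of_mul_le_mul_left ?_ ht
  calc t * 𝔼 s, D.sup' hD (fun v => |⟪signVec s, v⟫|)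
      ≤ t * 𝔼 s, J.sup' hJ (fun w => ⟪signVec s, w⟫) := by
        gcongr with s; exact habs s
    _ ≤ Real.log #J + t ^ 2 * σ ^ 2 / 2 := mul_expect_sup'_inner_signVec_le hJ hJσ ht
    _ ≤ t * (σ * √(2 * L)) := by
        rw [← mul_pow, ← mul_assoc, htσ, ← sq, hsq]
        linarith

end SignVector

def IsRademacher {Ω : Type*} [MeasurableSpace Ω] (X : Ω → ℝ) (μ : Measure Ω) : Prop :=
  μ {ω | X ω = 1} = ENNReal.ofReal (1/2) ∧ μ {ω | X ω = -1} = ENNReal.ofReal (1/2)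

lemma measurableSet_decide_eq_one (b : Bool) : MeasurableSet {y : ℝ | decide (y = 1) = b} := by
  cases b
  · simp only [decide_eq_false_iff_not]
    exact (measurableSet_singleton (1:ℝ)).compl
  · simp

section Rademacher

variable {Ω : Type*} [MeasurableSpace Ω] {μ : Measure Ω} [IsProbabilityMeasure μ]

lemma IsRademacher.ae_eq_boolSign {X : Ω → ℝ} (hX : IsRademacher X μ) (hm : Measurable X) :
    ∀ᵐ ω ∂μ, X ω = boolSign (decide (X ω = 1)) := by
  have hm1 := measurableSet_eq_fun hm (measurable_const (a := (1:ℝ)))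
  have hm2 := measurableSet_eq_fun hm (measurable_const (a := (-1:ℝ)))
  have hpm : μ ({ω | X ω = 1} ∪ {ω | X ω = -1}) = 1 := by
    rw [measure_union _ hm2, hX.1, hX.2, ← ENNReal.ofReal_add (by norm_num) (by norm_num)]
    · norm_num
    · exact Set.disjoint_left.2 fun ω h1 h2 => by
        simp only [Set.mem_ofPred_eq] at h1 h2; linarith
  filter_upwards
    [measure_eq_zero_iff_ae_notMem.1 ((prob_compl_eq_zero_iff (hm1.union hm2)).2 hpm)] with ω hω
  simp only [Set.mem_compl_iff, not_not, Set.mem_union, Set.mem_ofPred_eq] at hω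
  rcases hω with h | h <;> norm_num [h]

lemma IsRademacher.measure_decide_eq {X : Ω → ℝ} (hX : IsRademacher X μ) (hm : Measurable X)
    (b : Bool) : μ {ω | decide (X ω = 1) = b} = ENNReal.ofReal (1/2) := by
  cases b
  · simp only [decide_eq_false_iff_not]
    rw [show {ω | ¬X ω = 1} = {ω | X ω = 1}ᶜ from rfl,
      prob_compl_eq_one_sub (measurableSet_eq_fun hm measurable_const), hX.1,
      ← ENNReal.ofReal_one, ← ENNReal.ofReal_sub _ (by norm_num)]
    norm_num
  · simpa using hX.1

/-- No measurability of `G` is needed: almost surely every `ε i ω` is `±1`, so the integrand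
factors through the finitely-valued sign pattern of `ε ω`. -/
theorem integral_eq_expect_boolSign {ι : Type*} [Fintype ι] [DecidableEq ι] {ε : ι → Ω → ℝ}
    (hmeas : ∀ i, Measurable (ε i)) (hrad : ∀ i, IsRademacher (ε i) μ) (hind : iIndepFun ε μ)
    (G : (ι → ℝ) → ℝ) :
    ∫ ω, G (fun i => ε i ω) ∂μ = 𝔼 s : ι → Bool, G (fun i => boolSign (s i)) := by
  set pattern : Ω → ι → Bool := fun ω i => decide (ε i ω = 1)
  have hpattern : Measurable pattern := measurable_pi_lambda _ fun i =>
    measurable_to_countable' fun b => hmeas i (measurableSet_decide_eq_one b)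
  have hfiber : ∀ s, μ.real (pattern ⁻¹' {s}) = (2 ^ Fintype.card ι : ℝ)⁻¹ := by
    intro s
    have hpre : pattern ⁻¹' {s} = ⋂ i, {ω | decide (ε i ω = 1) = s i} := by
      ext ω; simp [pattern, funext_iff]
    rw [measureReal_def, hpre, hind.meas_iInter,
      prod_congr rfl fun i _ => (hrad i).measure_decide_eq (hmeas i) (s i)]
    · simp
    · exact fun i => ⟨_, measurableSet_decide_eq_one (s i), rfl⟩
  calc ∫ ω, G (fun i => ε i ω) ∂μ = ∫ ω, G (fun i => boolSign (pattern ω i)) ∂μ := by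
        refine integral_congr_ae ?_
        filter_upwards [ae_all_iff.2 fun i => (hrad i).ae_eq_boolSign (hmeas i)] with ω h
        exact congrArg G (funext h)
    _ = ∫ s, G (fun i => boolSign (s i)) ∂(μ.map pattern) :=
        (integral_map (f := fun s => G fun i => boolSign (s i)) hpattern.aemeasurable
          Measurable.of_discrete.aestronglyMeasurable).symm
    _ = 𝔼 s : ι → Bool, G (fun i => boolSign (s i)) := by
        rw [integral_fintype .of_finite, Fintype.expect_eq_sum_div_card, Finset.sum_div]
        refine Finset.sum_congr rfl fun s _ => ?_
        rw [map_measureReal_apply hpattern (measurableSet_singleton s), hfiber]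
        simp [div_eq_inv_mul]

end Rademacher

lemma norm_le_sum_abs {κ : Type*} [Fintype κ] (θ : EuclideanSpace ℝ κ) :
    ‖θ‖ ≤ ∑ j, |θ j| := by
  rw [EuclideanSpace.norm_eq, sqrt_le_left (sum_nonneg fun j _ => abs_nonneg _)]
  simpa using sum_sq_le_sq_sum_of_nonneg (s := univ) fun j _ => abs_nonneg (θ j)

section Maurey

variable {κ : Type*} [Fintype κ] [DecidableEq κ] {M : ℝ}

noncomputable def ell1Vertex (M : ℝ) (v : κ × Bool) : EuclideanSpace ℝ κ :=
  EuclideanSpace.single v.1 (boolSign v.2 * M)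

lemma norm_ell1Vertex (hM : 0 ≤ M) (v : κ × Bool) : ‖ell1Vertex M v‖ = M := by
  simp [ell1Vertex, abs_boolSign, abs_of_nonneg hM]

lemma sum_abs_ell1Vertex (hM : 0 ≤ M) (v : κ × Bool) : ∑ j, |ell1Vertex M v j| = M := by
  simp [ell1Vertex, apply_ite, abs_boolSign, abs_of_nonneg hM]

lemma exists_inner_sub_ell1Vertex_nonpos [Nonempty κ] {θ : EuclideanSpace ℝ κ}
    (hθ : ∑ j, |θ j| ≤ M) (w : EuclideanSpace ℝ κ) : ∃ v, ⟪w, θ - ell1Vertex M v⟫ ≤ 0 := by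
  obtain ⟨j₀, -, hj₀⟩ := exists_max_image univ (fun j => |w j|) univ_nonempty
  refine ⟨(j₀, decide (0 ≤ w j₀)), ?_⟩
  have hvert : ⟪w, ell1Vertex M (j₀, decide (0 ≤ w j₀))⟫ = |w j₀| * M := by
    rw [ell1Vertex, EuclideanSpace.inner_single_right]
    rcases le_or_gt 0 (w j₀) with h | h
    · simp [h, abs_of_nonneg h, mul_comm]
    · simp [h.not_ge, abs_of_neg h, mul_comm]
  have hθw : ⟪w, θ⟫ ≤ |w j₀| * M := by
    calc ⟪w, θ⟫ = ∑ j, θ j * w j := by simp [PiLp.inner_apply]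
      _ ≤ ∑ j, |θ j| * |w j₀| := sum_le_sum fun j _ =>
          (le_abs_self _).trans ((abs_mul _ _).trans_le
            (mul_le_mul_of_nonneg_left (hj₀ j (mem_univ j)) (abs_nonneg _)))
      _ = |w j₀| * ∑ j, |θ j| := by rw [← sum_mul, mul_comm]
      _ ≤ |w j₀| * M := by gcongr
  rw [inner_sub_right, hvert]
  linarith

/-- Maurey's empirical method, run greedily: choosing each new vertex against the current error
`w` makes the cross term `⟪w, θ - v⟫` nonpositive, so the squared error grows by at most
`(2M)²` per step. -/
lemma exists_norm_smul_sub_sum_ell1Vertex_sq_le [Nonempty κ] (hM : 0 ≤ M)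
    {θ : EuclideanSpace ℝ κ} (hθ : ∑ j, |θ j| ≤ M) :
    ∀ m : ℕ, ∃ u : Fin m → κ × Bool,
      ‖(m : ℝ) • θ - ∑ t, ell1Vertex M (u t)‖ ^ 2 ≤ m * (2 * M) ^ 2
  | 0 => ⟨Fin.elim0, by simp⟩
  | m + 1 => by
    obtain ⟨u, hu⟩ := exists_norm_smul_sub_sum_ell1Vertex_sq_le hM hθ m
    set w := (m : ℝ) • θ - ∑ t, ell1Vertex M (u t)
    obtain ⟨v, hv⟩ := exists_inner_sub_ell1Vertex_nonpos hθ w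
    have hstep : ‖θ - ell1Vertex M v‖ ≤ 2 * M := by
      calc ‖θ - ell1Vertex M v‖ ≤ ‖θ‖ + ‖ell1Vertex M v‖ := norm_sub_le _ _
        _ ≤ M + M := by rw [norm_ell1Vertex hM]; gcongr; exact (norm_le_sum_abs θ).trans hθ
        _ = 2 * M := by ring
    set u' : Fin (m + 1) → κ × Bool := Fin.snoc u v
    refine ⟨u', ?_⟩
    have hsplit : ((m + 1 : ℕ) : ℝ) • θ - ∑ t, ell1Vertex M (u' t) = w + (θ - ell1Vertex M v) := by
      simp only [Fin.sum_univ_castSucc, u', Fin.snoc_castSucc, Fin.snoc_last, w]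
      push_cast
      rw [add_smul, one_smul]
      abel
    rw [hsplit, norm_add_sq_real]
    push_cast
    nlinarith [pow_le_pow_left₀ (norm_nonneg _) hstep 2]

noncomputable def maureyNet (M : ℝ) (m : ℕ) : Finset (EuclideanSpace ℝ κ) :=
  univ.image fun u : Fin m → κ × Bool => (m : ℝ)⁻¹ • ∑ t, ell1Vertex M (u t)

lemma card_maureyNet_le (M : ℝ) (m : ℕ) :
    #(maureyNet M m : Finset (EuclideanSpace ℝ κ)) ≤ (2 * Fintype.card κ) ^ m :=
  card_image_le.trans (by simp [mul_comm])

lemma sum_abs_le_of_mem_maureyNet (hM : 0 ≤ M) {m : ℕ} {c : EuclideanSpace ℝ κ}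
    (hc : c ∈ maureyNet M m) : ∑ j, |c j| ≤ M := by
  obtain ⟨u, -, rfl⟩ := mem_image.1 hc
  calc ∑ j, |((m : ℝ)⁻¹ • ∑ t, ell1Vertex M (u t)) j|
      = (m : ℝ)⁻¹ * ∑ j, |∑ t, ell1Vertex M (u t) j| := by
        simp [abs_mul, ← mul_sum]
    _ ≤ (m : ℝ)⁻¹ * ∑ j, ∑ t, |ell1Vertex M (u t) j| := by
        gcongr; exact abs_sum_le_sum_abs _ _
    _ = (m : ℝ)⁻¹ * (m * M) := by
        rw [sum_comm]; simp [sum_abs_ell1Vertex hM]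
    _ ≤ M := by
        rcases m.eq_zero_or_pos with rfl | hm
        · simpa using hM
        · rw [inv_mul_cancel_left₀ (by positivity)]

lemma exists_mem_maureyNet_norm_sub_sq_le [Nonempty κ] (hM : 0 ≤ M) {θ : EuclideanSpace ℝ κ}
    (hθ : ∑ j, |θ j| ≤ M) {m : ℕ} (hm : 0 < m) :
    ∃ c ∈ maureyNet M m, ‖θ - c‖ ^ 2 ≤ (2 * M) ^ 2 / m := by
  obtain ⟨u, hu⟩ := exists_norm_smul_sub_sum_ell1Vertex_sq_le hM hθ m
  refine ⟨_, mem_image_of_mem _ (mem_univ u), ?_⟩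
  have hm' : (0 : ℝ) < m := by exact_mod_cast hm
  have hscale : θ - (m : ℝ)⁻¹ • ∑ t, ell1Vertex M (u t)
      = (m : ℝ)⁻¹ • ((m : ℝ) • θ - ∑ t, ell1Vertex M (u t)) := by
    rw [smul_sub, inv_smul_smul₀ hm'.ne']
  rw [hscale, norm_smul, mul_pow, norm_inv, Real.norm_of_nonneg hm'.le, le_div_iff₀ hm']
  calc _ = ‖(m : ℝ) • θ - ∑ t, ell1Vertex M (u t)‖ ^ 2 / m := by field_simp
    _ ≤ m * (2 * M) ^ 2 / m := by gcongr
    _ = (2 * M) ^ 2 := by field_simp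

end Maurey

section Chaining

variable {ι : Type*} [Fintype ι]

lemma abs_le_abs_add_sum_abs_sub (a : ℕ → ℝ) (b : ℝ) (K : ℕ) :
    |b| ≤ |a 0| + ∑ k ∈ range K, |a (k + 1) - a k| + |b - a K| := by
  have hsplit : b = a 0 + ∑ k ∈ range K, (a (k + 1) - a k) + (b - a K) := by
    rw [sum_range_sub]; ring
  calc |b| = |a 0 + ∑ k ∈ range K, (a (k + 1) - a k) + (b - a K)| := by rw [← hsplit]
    _ ≤ |a 0 + ∑ k ∈ range K, (a (k + 1) - a k)| + |b - a K| := abs_add_le _ _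
    _ ≤ |a 0| + ∑ k ∈ range K, |a (k + 1) - a k| + |b - a K| := by
        gcongr; exact (abs_add_le _ _).trans (by gcongr; exact abs_sum_le_sum_abs _ _)

open Classical in
noncomputable def chainLinks (N : ℕ → Finset (EuclideanSpace ℝ ι)) (r : ℕ → ℝ) (k : ℕ) :
    Finset (EuclideanSpace ℝ ι) :=
  ((N (k + 1) ×ˢ N k).filter fun p => ‖p.1 - p.2‖ ≤ r (k + 1) + r k).image fun p => p.1 - p.2

variable {N : ℕ → Finset (EuclideanSpace ℝ ι)} {r : ℕ → ℝ}

lemma card_chainLinks_le (k : ℕ) : #(chainLinks N r k) ≤ #(N (k + 1)) * #(N k) :=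
  card_image_le.trans ((card_filter_le _ _).trans (card_product _ _).le)

lemma norm_le_of_mem_chainLinks {k : ℕ} {w : EuclideanSpace ℝ ι} (hw : w ∈ chainLinks N r k) :
    ‖w‖ ≤ r (k + 1) + r k := by
  classical
  obtain ⟨p, hp, rfl⟩ := mem_image.1 hw
  exact (mem_filter.1 hp).2

lemma sub_mem_chainLinks {v : EuclideanSpace ℝ ι} {c : ℕ → EuclideanSpace ℝ ι}
    (hcN : ∀ k, c k ∈ N k) (hc : ∀ k, ‖v - c k‖ ≤ r k) (k : ℕ) :
    c (k + 1) - c k ∈ chainLinks N r k := by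
  classical
  refine mem_image.2 ⟨(c (k + 1), c k), mem_filter.2 ⟨mem_product.2 ⟨hcN _, hcN _⟩, ?_⟩, rfl⟩
  calc ‖c (k + 1) - c k‖ = ‖(v - c k) - (v - c (k + 1))‖ := by congr 1; abel
    _ ≤ ‖v - c k‖ + ‖v - c (k + 1)‖ := norm_sub_le _ _
    _ ≤ r (k + 1) + r k := by linarith [hc k, hc (k + 1)]

lemma chainLinks_nonempty {v : EuclideanSpace ℝ ι} (hv : ∀ k, ∃ c ∈ N k, ‖v - c‖ ≤ r k)
    (k : ℕ) : (chainLinks N r k).Nonempty := by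
  choose c hcN hc using hv
  exact ⟨_, sub_mem_chainLinks hcN hc k⟩

lemma abs_inner_signVec_le_chaining {v₀ : EuclideanSpace ℝ ι} (hN0 : N 0 = {v₀})
    (hlinks : ∀ k, (chainLinks N r k).Nonempty) {v : EuclideanSpace ℝ ι}
    (hv : ∀ k, ∃ c ∈ N k, ‖v - c‖ ≤ r k) (K : ℕ) (s : ι → Bool) :
    |⟪signVec s, v⟫| ≤ |⟪signVec s, v₀⟫|
      + ∑ k ∈ range K, (chainLinks N r k).sup' (hlinks k) (fun w => |⟪signVec s, w⟫|)
      + √(Fintype.card ι) * r K := by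
  choose c hcN hc using hv
  have hc0 : c 0 = v₀ := by simpa [hN0] using hcN 0
  refine (abs_le_abs_add_sum_abs_sub (fun k => ⟪signVec s, c k⟫) _ K).trans ?_
  simp only [hc0, ← inner_sub_right]
  gcongr with k
  · exact le_sup'_of_le _ (sub_mem_chainLinks hcN hc k) le_rfl
  · exact (abs_inner_signVec_le s _).trans (by gcongr; exact hc K)

variable [DecidableEq ι] in
theorem expect_iSup_abs_inner_signVec_le {T : Type*} [Nonempty T] (V : T → EuclideanSpace ℝ ι)
    {v₀ : EuclideanSpace ℝ ι} (hN0 : N 0 = {v₀}) (hcover : ∀ t k, ∃ c ∈ N k, ‖V t - c‖ ≤ r k)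
    (K : ℕ) :
    𝔼 s, ⨆ t, |⟪signVec s, V t⟫| ≤ 𝔼 s, |⟪signVec s, v₀⟫|
      + ∑ k ∈ range K, (r (k + 1) + r k) * √(2 * Real.log (2 * (#(N (k + 1)) * #(N k))))
      + √(Fintype.card ι) * r K := by
  obtain ⟨t₀⟩ := ‹Nonempty T›
  have hlinks := chainLinks_nonempty (hcover t₀)
  have hr : ∀ k, 0 ≤ r k := fun k =>
    let ⟨_, _, h⟩ := hcover t₀ k; (norm_nonneg _).trans h
  calc 𝔼 s, ⨆ t, |⟪signVec s, V t⟫|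
      ≤ 𝔼 s, (|⟪signVec s, v₀⟫|
          + ∑ k ∈ range K, (chainLinks N r k).sup' (hlinks k) (fun w => |⟪signVec s, w⟫|)
          + √(Fintype.card ι) * r K) := expect_le_expect fun s _ =>
        ciSup_le fun t => abs_inner_signVec_le_chaining hN0 hlinks (hcover t) K s
    _ = 𝔼 s, |⟪signVec s, v₀⟫|
          + ∑ k ∈ range K, 𝔼 s, (chainLinks N r k).sup' (hlinks k) (fun w => |⟪signVec s, w⟫|)
          + √(Fintype.card ι) * r K := by
        rw [expect_add_distrib, expect_add_distrib, expect_sum_comm, Fintype.expect_const]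
    _ ≤ _ := by
        gcongr with k
        have hσ : 0 ≤ r (k + 1) + r k := add_nonneg (hr _) (hr _)
        refine (expect_sup'_abs_inner_signVec_le (hlinks k) hσ
          fun w hw => norm_le_of_mem_chainLinks hw).trans ?_
        have hpos : (0 : ℝ) < 2 * #(chainLinks N r k) := by
          have := (hlinks k).card_pos; positivity
        gcongr
        exact_mod_cast card_chainLinks_le k

end Chaining

section Ell1Ball

variable {κ F : Type*} [Fintype κ] [DecidableEq κ] [Nonempty κ] [NormedAddCommGroup F]
  {M L : ℝ}

theorem exists_nets_image_ell1Ball (hM : 0 ≤ M) (hL : 0 ≤ L) (Φ : EuclideanSpace ℝ κ → F)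
    (hΦ : ∀ θ θ' : EuclideanSpace ℝ κ, ∑ j, |θ j| ≤ M → ∑ j, |θ' j| ≤ M →
      ‖Φ θ - Φ θ'‖ ≤ L * ‖θ - θ'‖)
    {θ₀ : EuclideanSpace ℝ κ} (hθ₀ : ∑ j, |θ₀ j| ≤ M) :
    ∃ N : ℕ → Finset F, N 0 = {Φ θ₀} ∧ (∀ k, #(N k) ≤ (2 * Fintype.card κ) ^ 4 ^ k) ∧
      ∀ θ : EuclideanSpace ℝ κ, ∑ j, |θ j| ≤ M →
        ∀ k, ∃ c ∈ N k, ‖Φ θ - c‖ ≤ L * (2 * M / 2 ^ k) := by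
  classical
  refine ⟨fun k => if k = 0 then {Φ θ₀} else (maureyNet M (4 ^ k)).image Φ, if_pos rfl, ?_, ?_⟩
  · rintro (_ | k)
    · simpa using Nat.one_le_iff_ne_zero.2 (by positivity)
    · simpa using card_image_le.trans (card_maureyNet_le M _)
  · rintro θ hθ (_ | k)
    · refine ⟨Φ θ₀, by simp, (hΦ θ θ₀ hθ hθ₀).trans ?_⟩
      gcongr
      calc ‖θ - θ₀‖ ≤ ‖θ‖ + ‖θ₀‖ := norm_sub_le _ _
        _ ≤ M + M := add_le_add ((norm_le_sum_abs θ).trans hθ) ((norm_le_sum_abs θ₀).trans hθ₀)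
        _ = 2 * M / 2 ^ 0 := by ring
    · obtain ⟨c, hc, hθc⟩ :=
        exists_mem_maureyNet_norm_sub_sq_le hM hθ (pow_pos four_pos (k + 1))
      refine ⟨Φ c, by simp [mem_image_of_mem _ hc],
        (hΦ θ c hθ (sum_abs_le_of_mem_maureyNet hM hc)).trans ?_⟩
      gcongr
      rw [← pow_le_pow_iff_left₀ (norm_nonneg _) (by positivity) two_ne_zero]
      calc ‖θ - c‖ ^ 2 ≤ (2 * M) ^ 2 / 4 ^ (k + 1) := by exact_mod_cast hθc
        _ = (2 * M / 2 ^ (k + 1)) ^ 2 := by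
          rw [div_pow, ← pow_mul, mul_comm (k + 1), pow_mul]; norm_num

end Ell1Ball

lemma two_mul_log_two_mul_le {l k a b : ℕ} (hl : 0 < l) (ha : a ≤ (2 * l) ^ 4 ^ (k + 1))
    (hb : b ≤ (2 * l) ^ 4 ^ k) :
    2 * Real.log (2 * (a * b)) ≤ (5 * 2 ^ k) ^ 2 * Real.log (l + 1) := by
  have hcard : 2 * (a * b) ≤ (l + 1) ^ (12 * 4 ^ k) :=
    calc 2 * (a * b) ≤ 2 * ((2 * l) ^ 4 ^ (k + 1) * (2 * l) ^ 4 ^ k) := by gcongr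
      _ = (2 * l) ^ (5 * 4 ^ k) * 2 := by rw [← pow_add, pow_succ]; ring_nf
      _ ≤ (2 * l) ^ (5 * 4 ^ k) * (2 * l) := by gcongr; omega
      _ ≤ (2 * l) ^ (6 * 4 ^ k) := by
          rw [← pow_succ]
          have := Nat.one_le_pow k 4 (by norm_num)
          exact Nat.pow_le_pow_right (by omega) (by omega)
      _ ≤ ((l + 1) ^ 2) ^ (6 * 4 ^ k) := by gcongr; nlinarith
      _ = (l + 1) ^ (12 * 4 ^ k) := by rw [← pow_mul]; ring_nf
  have hL : 0 ≤ Real.log (l + 1) := Real.log_nonneg (by simp)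
  have hlog : Real.log (2 * (a * b)) ≤ 12 * 4 ^ k * Real.log (l + 1) := by
    rcases (2 * (a * b)).eq_zero_or_pos with h | h
    · have h' : (2 * ((a : ℝ) * b)) = 0 := by exact_mod_cast h
      rw [h', Real.log_zero]; positivity
    · calc Real.log (2 * (a * b)) ≤ Real.log (((l + 1) ^ (12 * 4 ^ k) : ℕ)) :=
            Real.log_le_log (by exact_mod_cast h) (by exact_mod_cast hcard)
        _ = 12 * 4 ^ k * Real.log (l + 1) := by push_cast; rw [Real.log_pow]; push_cast; ring
  have h4 : (0 : ℝ) < 4 ^ k := by positivity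
  calc 2 * Real.log (2 * (a * b)) ≤ 24 * 4 ^ k * Real.log (l + 1) := by linarith
    _ ≤ 25 * 4 ^ k * Real.log (l + 1) := by gcongr; norm_num
    _ = (5 * 2 ^ k) ^ 2 * Real.log (l + 1) := by
        rw [mul_pow, ← pow_mul, mul_comm k, pow_mul]; norm_num

lemma natLog_two_add_one_le {n : ℕ} (hn : 0 < n) :
    ((Nat.log 2 n + 1 : ℕ) : ℝ) ≤ 3 * Real.log (n + 1) := by
  have hpow : (2 : ℝ) ^ (Nat.log 2 n + 1) ≤ (n + 1) ^ 2 := by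
    have h := Nat.pow_log_le_self 2 hn.ne'
    have h' : (2 : ℝ) ^ Nat.log 2 n ≤ n := by exact_mod_cast h
    have : (1 : ℝ) ≤ n := by exact_mod_cast hn
    rw [pow_succ]; nlinarith
  have hlog : ((Nat.log 2 n + 1 : ℕ) : ℝ) * Real.log 2 ≤ 2 * Real.log (n + 1) := by
    calc ((Nat.log 2 n + 1 : ℕ) : ℝ) * Real.log 2 = Real.log (2 ^ (Nat.log 2 n + 1)) :=
          (Real.log_pow _ _).symm
      _ ≤ Real.log ((n + 1) ^ 2) := Real.log_le_log (by positivity) hpow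
      _ = 2 * Real.log (n + 1) := by rw [Real.log_pow]; norm_num
  have h2 := Real.log_two_gt_d9
  have hn1 : 0 ≤ Real.log (n + 1) := Real.log_nonneg (by simp)
  nlinarith

/-- Each level contributes at most `15 √(n log (l+1)) A M`, there are at most `3 log (n+1)`
levels, and the remainder `2AM` is absorbed using `√(n log (l+1)) log (n+1) ≥ 1/2`. -/
lemma chaining_sum_le {F : Type*} {n l : ℕ} (hn : 0 < n) (hl : 0 < l) {A M : ℝ} (hA : 0 ≤ A)
    (hM : 0 ≤ M) {N : ℕ → Finset F} (hN : ∀ k, #(N k) ≤ (2 * l) ^ 4 ^ k) {r : ℕ → ℝ}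
    (hr : ∀ k, r k = √n * A * (2 * M / 2 ^ k)) :
    ∑ k ∈ range (Nat.log 2 n + 1),
        (r (k + 1) + r k) * √(2 * Real.log (2 * (#(N (k + 1)) * #(N k))))
      + √n * r (Nat.log 2 n + 1)
      ≤ 50 * √(n * Real.log (l + 1)) * Real.log (n + 1) * A * M := by
  set K := Nat.log 2 n + 1
  set S := √(n * Real.log (l + 1))
  have hn1 : (1 : ℝ) ≤ n := by exact_mod_cast hn
  have hl1 : (1 : ℝ) ≤ l := by exact_mod_cast hl
  have hlog2 := Real.log_two_gt_d9
  have hSdef : S = √n * √(Real.log (l + 1)) := Real.sqrt_mul (by positivity) _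
  have hlevel : ∀ k, (r (k + 1) + r k) * √(2 * Real.log (2 * (#(N (k + 1)) * #(N k))))
      ≤ 15 * S * (A * M) := by
    intro k
    have hsqrt := Real.sqrt_le_sqrt (two_mul_log_two_mul_le hl (hN (k + 1)) (hN k))
    rw [Real.sqrt_mul (sq_nonneg _), Real.sqrt_sq (by positivity)] at hsqrt
    have hrk : r (k + 1) + r k = 3 * √n * (A * M) / 2 ^ k := by
      rw [hr, hr, pow_succ]; field_simp; ring
    calc (r (k + 1) + r k) * √(2 * Real.log (2 * (#(N (k + 1)) * #(N k))))
        ≤ 3 * √n * (A * M) / 2 ^ k * (5 * 2 ^ k * √(Real.log (l + 1))) := by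
          rw [hrk]; gcongr
      _ = 15 * S * (A * M) := by rw [hSdef]; field_simp; ring
  have htail : √n * r K ≤ 2 * (A * M) := by
    have hnK : (n : ℝ) ≤ 2 ^ K := by exact_mod_cast (Nat.lt_pow_succ_log_self one_lt_two n).le
    rw [hr, ← mul_assoc, ← mul_assoc, Real.mul_self_sqrt (by positivity), mul_div_assoc',
      div_le_iff₀ (by positivity)]
    nlinarith [mul_nonneg hA hM]
  have hK := natLog_two_add_one_le hn
  have hS : 1 / 2 ≤ S * Real.log (n + 1) := by
    have h1 : 0.8 ≤ S := by
      rw [Real.le_sqrt (by norm_num) (mul_nonneg (by positivity) (Real.log_nonneg (by linarith)))]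
      nlinarith [Real.log_le_log (by norm_num) (by linarith : (2:ℝ) ≤ l + 1)]
    have h2 : 0.69 ≤ Real.log (n + 1) := by
      linarith [Real.log_le_log (by norm_num) (by linarith : (2:ℝ) ≤ n + 1)]
    nlinarith
  have hAM : 0 ≤ A * M := mul_nonneg hA hM
  have hS0 : 0 ≤ S := Real.sqrt_nonneg _
  calc _ ≤ ∑ _k ∈ range K, 15 * S * (A * M) + 2 * (A * M) :=
        add_le_add (sum_le_sum fun k _ => hlevel k) htail
    _ = K * (15 * S * (A * M)) + 2 * (A * M) := by rw [sum_const, card_range, nsmul_eq_mul]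
    _ ≤ 3 * Real.log (n + 1) * (15 * S * (A * M)) + 4 * (S * Real.log (n + 1)) * (A * M) := by
        gcongr; linarith
    _ ≤ 50 * S * Real.log (n + 1) * A * M := by
        have : 0 ≤ S * Real.log (n + 1) * (A * M) := by positivity
        nlinarith

/-- Theorem 1.1 (general contraction case): there is a universal constant `K > 0` such
that for all `n, l ≥ 1`, `M > 0`, any covariable space `𝔛`, covariables `x`, any family
of functions `φ_θ`, any i.i.d. Rademacher sequence `ε`, and any `A ≥ 0` with
`d(θ,θ') ≤ √n · A · ‖θ - θ'‖₂` on `Θ = {θ : ‖θ‖₁ ≤ M}`, one has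
`E sup_{θ∈Θ} |X_θ| ≤ E|X_{θ₀}| + K √(n log(l+1)) log(n+1) A M`. -/
theorem rademacher_entropy_bound_contraction :
    ∃ K : ℝ, 0 < K ∧
      ∀ (n l : ℕ), 0 < n → 0 < l →
      ∀ (M : ℝ), 0 < M →
      ∀ (𝔛 : Type) (x : Fin n → 𝔛) (φ : (Fin l → ℝ) → 𝔛 → ℝ)
        (Ω : Type) (mΩ : MeasurableSpace Ω) (μ : Measure Ω), IsProbabilityMeasure μ →
      ∀ (ε : Fin n → Ω → ℝ),
        (∀ i, Measurable (ε i)) →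
        (∀ i, μ {ω | ε i ω = 1} = ENNReal.ofReal (1/2) ∧
              μ {ω | ε i ω = -1} = ENNReal.ofReal (1/2)) →
        iIndepFun ε μ →
      ∀ (A : ℝ), 0 ≤ A →
        -- contraction property of the family `φ` w.r.t. the empirical pseudometric `d`
        (∀ θ θ' : Fin l → ℝ, (∑ j, |θ j|) ≤ M → (∑ j, |θ' j|) ≤ M →
          Real.sqrt (∑ i, (φ θ (x i) - φ θ' (x i))^2)
            ≤ Real.sqrt n * A * Real.sqrt (∑ j, (θ j - θ' j)^2)) →
      ∀ (θ₀ : Fin l → ℝ), (∑ j, |θ₀ j|) ≤ M →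
        (∫ ω, (⨆ θ : {θ : Fin l → ℝ // (∑ j, |θ j|) ≤ M},
            |∑ i, ε i ω * φ θ.1 (x i)|) ∂μ)
          ≤ (∫ ω, |∑ i, ε i ω * φ θ₀ (x i)| ∂μ)
            + K * Real.sqrt (n * Real.log (l + 1)) * Real.log (n + 1) * A * M := by
  refine ⟨50, by norm_num, ?_⟩
  intro n l hn hl M hM 𝔛 x φ Ω _ μ hμ ε hmeas hrad hind A hA hcontr θ₀ hθ₀
  have : Nonempty (Fin l) := ⟨⟨0, hl⟩⟩
  have : Nonempty {θ : Fin l → ℝ // ∑ j, |θ j| ≤ M} := ⟨⟨0, by simpa using hM.le⟩⟩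
  let Φ : EuclideanSpace ℝ (Fin l) → EuclideanSpace ℝ (Fin n) :=
    fun θ => WithLp.toLp 2 fun i => φ θ.ofLp (x i)
  have hΦ : ∀ θ θ' : EuclideanSpace ℝ (Fin l), ∑ j, |θ j| ≤ M → ∑ j, |θ' j| ≤ M →
      ‖Φ θ - Φ θ'‖ ≤ √n * A * ‖θ - θ'‖ := fun θ θ' hθ hθ' => by
    simpa [Φ, EuclideanSpace.norm_eq, sq_abs] using hcontr θ.ofLp θ'.ofLp hθ hθ'
  obtain ⟨N, hN0, hNcard, hcover⟩ := exists_nets_image_ell1Ball hM.le (by positivity) Φ hΦ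
    (θ₀ := WithLp.toLp 2 θ₀) hθ₀
  have hchain := expect_iSup_abs_inner_signVec_le
    (fun θ : {θ : Fin l → ℝ // ∑ j, |θ j| ≤ M} => Φ (WithLp.toLp 2 θ.1)) hN0
    (fun θ => hcover _ θ.2) (Nat.log 2 n + 1)
  simp only [inner_signVec, Fintype.card_fin] at hchain
  rw [integral_eq_expect_boolSign hmeas hrad hind
      (fun e => ⨆ θ : {θ : Fin l → ℝ // ∑ j, |θ j| ≤ M}, |∑ i, e i * φ θ.1 (x i)|),
    integral_eq_expect_boolSign hmeas hrad hind (fun e => |∑ i, e i * φ θ₀ (x i)|)]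
  refine hchain.trans ?_
  rw [add_assoc]
  gcongr
  exact chaining_sum_le hn hl hA hM.le (by simpa using hNcard) fun k => rfl
end

section
/- There exists a universal constant K > 0 such that for all positive integers n, l, all M > 0, and every matrix X ∈ ℝ^{n×l} whose columns each have Euclidean norm √n: E sup_{θ ∈ Θ} |ε⃗ᵀ X θ| ≤ K · √(n · log(l+1)) · M, where Θ := {θ ∈ ℝˡ : ‖θ‖₁ ≤ M} and ε⃗ = (ε₁,…,εₙ). -/
/-!
By ℓ¹–ℓ∞ duality, the supremum of `θ ↦ εᵀXθ = ⟨Xᵀε, θ⟩` over the ℓ¹-ball of radius `M` is at most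
`M · maxⱼ |(Xᵀε)ⱼ|`. Each coordinate `(Xᵀε)ⱼ = ∑ᵢ Xᵢⱼ εᵢ` is sub-Gaussian with variance proxy
`∑ᵢ Xᵢⱼ² = n` (Hoeffding), and the expected maximum of the absolute values of `l` such variables
is at most `√(2 n log (2l))`: apply Jensen's inequality to `exp (t · max)`, bound the maximum of
exponentials by their sum, and optimize in `t`. Finally `2l ≤ (l + 1)²`, which gives `K = 2`.
-/

open MeasureTheory ProbabilityTheory Real ENNReal
open scoped NNReal

lemma exp_mul_iSup_abs_le_sum {ι : Type*} [Fintype ι] [Nonempty ι] (y : ι → ℝ) (t : ℝ) :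
    exp (t * ⨆ j, |y j|) ≤ ∑ j, (exp (t * y j) + exp (-(t * y j))) := by
  obtain ⟨j₀, hj₀⟩ := exists_eq_ciSup_of_finite (f := fun j => |y j|)
  rw [← hj₀]
  refine le_trans ?_ (Finset.single_le_sum (f := fun j => exp (t * y j) + exp (-(t * y j)))
    (fun j _ => by positivity) (Finset.mem_univ j₀))
  rcases abs_cases (y j₀) with ⟨h, -⟩ | ⟨h, -⟩ <;> rw [h]
  · exact le_add_of_nonneg_right (exp_pos _).le
  · rw [mul_neg]
    exact le_add_of_nonneg_left (exp_pos _).le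

lemma abs_dotProduct_le_iSup_abs_mul_sum_abs {ι : Type*} [Fintype ι] (v θ : ι → ℝ) :
    |v ⬝ᵥ θ| ≤ (⨆ j, |v j|) * ∑ j, |θ j| := by
  rw [Finset.mul_sum]
  calc |v ⬝ᵥ θ| ≤ ∑ j, |v j * θ j| := Finset.abs_sum_le_sum_abs _ _
    _ = ∑ j, |v j| * |θ j| := by simp_rw [abs_mul]
    _ ≤ ∑ j, (⨆ k, |v k|) * |θ j| := Finset.sum_le_sum fun j _ =>
        mul_le_mul_of_nonneg_right (le_ciSup (f := fun k => |v k|) (Finite.bddAbove_range _) j)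
          (abs_nonneg _)

lemma log_two_mul_le_two_mul_log_add_one {x : ℝ} (hx : 0 ≤ x) :
    Real.log (2 * x) ≤ 2 * Real.log (x + 1) := by
  rcases hx.eq_or_lt with rfl | hx
  · simp
  calc Real.log (2 * x) ≤ Real.log ((x + 1) ^ 2) :=
        Real.log_le_log (by positivity) (by nlinarith)
    _ = 2 * Real.log (x + 1) := by rw [Real.log_pow]; norm_num

lemma sqrt_two_mul_log_two_mul_le {a x : ℝ} (ha : 0 ≤ a) (hx : 0 ≤ x) :
    √(2 * a * Real.log (2 * x)) ≤ 2 * √(a * Real.log (x + 1)) := by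
  calc √(2 * a * Real.log (2 * x)) ≤ √(2 ^ 2 * (a * Real.log (x + 1))) :=
        sqrt_le_sqrt (by nlinarith [log_two_mul_le_two_mul_log_add_one hx])
    _ = 2 * √(a * Real.log (x + 1)) := by rw [sqrt_mul (by positivity), sqrt_sq two_pos.le]

namespace ProbabilityTheory

variable {Ω : Type*} [MeasurableSpace Ω] {μ : Measure Ω}

def IsRademacher (e : Ω → ℝ) (μ : Measure Ω) : Prop :=
  μ {ω | e ω = 1} = ENNReal.ofReal (1/2) ∧ μ {ω | e ω = -1} = ENNReal.ofReal (1/2)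

section Rademacher

variable [IsProbabilityMeasure μ]

namespace IsRademacher

variable {e : Ω → ℝ}

lemma ae_eq_one_or_eq_neg_one (h : IsRademacher e μ) (he : Measurable e) :
    ∀ᵐ ω ∂μ, e ω = 1 ∨ e ω = -1 := by
  have hA : MeasurableSet {ω | e ω = 1} := he (measurableSet_singleton 1)
  have hB : MeasurableSet {ω | e ω = -1} := he (measurableSet_singleton (-1))
  have hdisj : Disjoint {ω | e ω = 1} {ω | e ω = -1} :=
    Set.disjoint_left.2 fun ω (h₁ : e ω = 1) (h₂ : e ω = -1) => by linarith
  refine (mem_ae_iff_prob_eq_one (hA.union hB)).2 ?_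
  rw [measure_union hdisj hB, h.1, h.2, ← ENNReal.ofReal_add (by norm_num) (by norm_num)]
  norm_num

lemma integral_eq_zero (h : IsRademacher e μ) (he : Measurable e) : μ[e] = 0 := by
  have hA : MeasurableSet {ω | e ω = 1} := he (measurableSet_singleton 1)
  have hB : MeasurableSet {ω | e ω = -1} := he (measurableSet_singleton (-1))
  have hind : e =ᵐ[μ] fun ω => {ω | e ω = 1}.indicator 1 ω - {ω | e ω = -1}.indicator 1 ω := by
    filter_upwards [h.ae_eq_one_or_eq_neg_one he] with ω hω
    rcases hω with hω | hω <;> norm_num [hω]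
  rw [integral_congr_ae hind, integral_sub ((integrable_const 1).indicator hA)
    ((integrable_const 1).indicator hB), integral_indicator_one hA, integral_indicator_one hB,
    measureReal_def, measureReal_def, h.1, h.2, sub_self]

lemma hasSubgaussianMGF (h : IsRademacher e μ) (he : Measurable e) :
    HasSubgaussianMGF e 1 μ := by
  have hIcc : ∀ᵐ ω ∂μ, e ω ∈ Set.Icc (-1) 1 := by
    filter_upwards [h.ae_eq_one_or_eq_neg_one he] with ω hω
    rcases hω with hω | hω <;> norm_num [hω]
  convert hasSubgaussianMGF_of_mem_Icc_of_integral_eq_zero he.aemeasurable hIcc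
    (h.integral_eq_zero he)
  ext
  norm_num

end IsRademacher

lemma hasSubgaussianMGF_sum_mul_of_isRademacher {ι : Type*} [Fintype ι] {ε : ι → Ω → ℝ}
    (hε : ∀ i, IsRademacher (ε i) μ) (hmeas : ∀ i, Measurable (ε i)) (hindep : iIndepFun ε μ)
    (a : ι → ℝ) :
    HasSubgaussianMGF (fun ω => ∑ i, a i * ε i ω) (∑ i, ‖a i‖₊ ^ 2) μ := by
  have h := HasSubgaussianMGF.sum_of_iIndepFun (s := Finset.univ)
    (hindep.comp (fun i => (a i * ·)) fun i => measurable_const_mul (a i))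
    fun i _ => ((hε i).hasSubgaussianMGF (hmeas i)).const_mul (a i)
  refine (congrArg (HasSubgaussianMGF _ · μ) ?_).mp h
  exact Finset.sum_congr rfl fun i _ => (mul_one _).trans (NNReal.eq (by simp; rfl))

end Rademacher

section MaximalInequality

variable {ι : Type*} [Fintype ι] {Y : ι → Ω → ℝ} {c : ℝ≥0}

lemma integrable_iSup_abs (hY : ∀ j, Integrable (Y j) μ) :
    Integrable (fun ω => ⨆ j, |Y j ω|) μ := by
  refine (integrable_finsetSum Finset.univ fun j _ => (hY j).abs).mono'
    (AEMeasurable.iSup fun j => (hY j).aemeasurable.abs).aestronglyMeasurable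
    (ae_of_all _ fun ω => ?_)
  rw [norm_of_nonneg (Real.iSup_nonneg fun j => abs_nonneg _)]
  exact Real.iSup_le (fun j => Finset.single_le_sum (f := fun j => |Y j ω|)
    (fun j _ => abs_nonneg _) (Finset.mem_univ j)) (by positivity)

variable [IsProbabilityMeasure μ] [Nonempty ι]

lemma mul_integral_iSup_abs_le (hY : ∀ j, HasSubgaussianMGF (Y j) c μ) (t : ℝ) :
    t * ∫ ω, ⨆ j, |Y j ω| ∂μ ≤ Real.log (2 * Fintype.card ι) + c * t ^ 2 / 2 := by
  have hF : Integrable (fun ω => ⨆ j, |Y j ω|) μ := integrable_iSup_abs fun j => (hY j).integrable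
  have hexp_neg : ∀ j, Integrable (fun ω => exp (-(t * Y j ω))) μ := fun j => by
    simpa [neg_mul] using (hY j).integrable_exp_mul (-t)
  have hG : Integrable (fun ω => ∑ j, (exp (t * Y j ω) + exp (-(t * Y j ω)))) μ :=
    integrable_finsetSum Finset.univ fun j _ => ((hY j).integrable_exp_mul t).add (hexp_neg j)
  have hexpF : Integrable (fun ω => exp (t * ⨆ j, |Y j ω|)) μ :=
    hG.mono' (hF.aemeasurable.const_mul t).exp.aestronglyMeasurable (ae_of_all _ fun ω => by
      rw [norm_of_nonneg (exp_pos _).le]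
      exact exp_mul_iSup_abs_le_sum (Y · ω) t)
  rw [← exp_le_exp, exp_add, Real.exp_log (by positivity)]
  calc exp (t * ∫ ω, ⨆ j, |Y j ω| ∂μ)
      = exp (∫ ω, t * ⨆ j, |Y j ω| ∂μ) := by rw [integral_const_mul]
    _ ≤ ∫ ω, exp (t * ⨆ j, |Y j ω|) ∂μ :=
        convexOn_exp.map_integral_le continuous_exp.continuousOn isClosed_univ
          (ae_of_all _ fun _ => trivial) (hF.const_mul t) hexpF
    _ ≤ ∫ ω, ∑ j, (exp (t * Y j ω) + exp (-(t * Y j ω))) ∂μ :=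
        integral_mono hexpF hG fun ω => exp_mul_iSup_abs_le_sum (Y · ω) t
    _ = ∑ j, (mgf (Y j) μ t + mgf (Y j) μ (-t)) := by
        rw [integral_finsetSum (f := fun j ω => exp (t * Y j ω) + exp (-(t * Y j ω)))
          Finset.univ fun j _ => ((hY j).integrable_exp_mul t).add (hexp_neg j)]
        refine Finset.sum_congr rfl fun j _ => ?_
        rw [integral_add ((hY j).integrable_exp_mul t) (hexp_neg j)]
        simp [mgf, neg_mul]
    _ ≤ ∑ _j : ι, 2 * exp (c * t ^ 2 / 2) := Finset.sum_le_sum fun j _ => by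
        have h₁ := (hY j).mgf_le t
        have h₂ := (hY j).mgf_le (-t)
        rw [neg_sq] at h₂
        linarith
    _ = 2 * Fintype.card ι * exp (c * t ^ 2 / 2) := by
        rw [Finset.sum_const, Finset.card_univ, nsmul_eq_mul]
        ring

lemma integral_iSup_abs_le_sqrt (hY : ∀ j, HasSubgaussianMGF (Y j) c μ) (hc : 0 < c) :
    ∫ ω, ⨆ j, |Y j ω| ∂μ ≤ √(2 * c * Real.log (2 * Fintype.card ι)) := by
  set L := Real.log (2 * Fintype.card ι)
  have hL : 0 < L := log_pos (by
    have : (1 : ℝ) ≤ Fintype.card ι := by exact_mod_cast Fintype.card_pos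
    linarith)
  have hc' : (0 : ℝ) < c := hc
  set s := √(2 * c * L)
  have hs : 0 < s := sqrt_pos.2 (by positivity)
  have hs2 : s ^ 2 = 2 * c * L := sq_sqrt (by positivity)
  have ht : 0 < s / c := by positivity
  refine le_of_mul_le_mul_left ?_ ht
  calc s / c * ∫ ω, ⨆ j, |Y j ω| ∂μ ≤ L + c * (s / c) ^ 2 / 2 := mul_integral_iSup_abs_le hY _
    _ = s / c * s := by field_simp; rw [hs2]; ring

end MaximalInequality

end ProbabilityTheory

/-- Example 2.1: there is a universal constant `K > 0` such that for every `n, l ≥ 1`,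
`M > 0`, matrix `X ∈ ℝ^{n×l}` with columns of Euclidean norm `√n`, and i.i.d.
Rademacher sequence `ε`, one has
`E sup_{‖θ‖₁ ≤ M} |ε⃗ᵀ X θ| ≤ K √(n log(l+1)) M`. -/
theorem rademacher_linear_example :
    ∃ K : ℝ, 0 < K ∧
      ∀ (n l : ℕ), 0 < n → 0 < l →
      ∀ (M : ℝ), 0 < M →
      ∀ (X : Matrix (Fin n) (Fin l) ℝ),
        -- normalization: all columns have Euclidean norm `√n`
        (∀ j, ∑ i, (X i j)^2 = n) →
      ∀ (Ω : Type) (mΩ : MeasurableSpace Ω) (μ : Measure Ω), IsProbabilityMeasure μ →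
      ∀ (ε : Fin n → Ω → ℝ),
        (∀ i, Measurable (ε i)) →
        (∀ i, μ {ω | ε i ω = 1} = ENNReal.ofReal (1/2) ∧
              μ {ω | ε i ω = -1} = ENNReal.ofReal (1/2)) →
        iIndepFun ε μ →
        (∫ ω, (⨆ θ : {θ : Fin l → ℝ // (∑ j, |θ j|) ≤ M},
            |∑ i, ε i ω * ∑ j, X i j * θ.1 j|) ∂μ)
          ≤ K * Real.sqrt (n * Real.log (l + 1)) * M := by
  refine ⟨2, two_pos, fun n l hn hl M hM X hX Ω _ μ _ ε hmeas hε hindep => ?_⟩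
  have : Nonempty (Fin l) := Fin.pos_iff_nonempty.1 hl
  set S : Fin l → Ω → ℝ := fun j ω => ∑ i, X i j * ε i ω
  have hS : ∀ j, HasSubgaussianMGF (S j) n μ := fun j => by
    convert hasSubgaussianMGF_sum_mul_of_isRademacher hε hmeas hindep (X · j)
    apply NNReal.eq
    simp [← hX j]
  have hsup : ∀ ω, (⨆ θ : {θ : Fin l → ℝ // (∑ j, |θ j|) ≤ M},
      |∑ i, ε i ω * ∑ j, X i j * θ.1 j|) ≤ (⨆ j, |S j ω|) * M := fun ω =>
    Real.iSup_le (fun θ => by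
      change |(ε · ω) ⬝ᵥ X.mulVec θ.1| ≤ _
      rw [Matrix.dotProduct_mulVec, ← Matrix.mulVec_transpose]
      exact (abs_dotProduct_le_iSup_abs_mul_sum_abs _ _).trans
        (mul_le_mul_of_nonneg_left θ.2 (Real.iSup_nonneg fun _ => abs_nonneg _)))
      (mul_nonneg (Real.iSup_nonneg fun _ => abs_nonneg _) hM.le)
  calc (∫ ω, (⨆ θ : {θ : Fin l → ℝ // (∑ j, |θ j|) ≤ M},
        |∑ i, ε i ω * ∑ j, X i j * θ.1 j|) ∂μ)
      ≤ ∫ ω, (⨆ j, |S j ω|) * M ∂μ :=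
        integral_mono_of_nonneg (ae_of_all _ fun ω => Real.iSup_nonneg fun _ => abs_nonneg _)
          ((integrable_iSup_abs fun j => (hS j).integrable).mul_const M) (ae_of_all _ hsup)
    _ = (∫ ω, ⨆ j, |S j ω| ∂μ) * M := integral_mul_const _ _
    _ ≤ √(2 * n * Real.log (2 * l)) * M := by
        gcongr
        simpa using integral_iSup_abs_le_sqrt hS (Nat.cast_pos.2 hn)
    _ ≤ 2 * √(n * Real.log (l + 1)) * M := by
        gcongr
        exact sqrt_two_mul_log_two_mul_le n.cast_nonneg l.cast_nonneg
end

section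
/- Suppose there exists A ≥ 0 with d(θ,θ') ≤ √n · A · ‖θ − θ'‖₂ for all θ, θ' ∈ Θ. Then for every positive integer k, the covering number satisfies N(Θ, d, 2·√(n/k)·A·M) ≤ C(2l + k − 1, k), where C(·,·) denotes the binomial coefficient. -/
open MeasureTheory Real

/-- The covering number `N(A, d, ε)`: the minimal number of closed `d`-balls of radius
`ε` (centered in `A`) needed to cover `A`. -/
noncomputable def coveringNumber {X : Type*} (d : X → X → ℝ) (A : Set X) (ε : ℝ) : ℕ :=
  sInf {m : ℕ | ∃ S : Finset X, ↑S ⊆ A ∧ S.card = m ∧ ∀ a ∈ A, ∃ s ∈ S, d a s ≤ ε}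

/-!
With `q = M / k`, the centres are the points `q • ∑ₐ ±e_a`, one for each multiset of `k` signed
basis vectors; they lie in the `ℓ¹`-ball of radius `M` and there are `C(2l + k - 1, k)` of them.
Rounding every `|θⱼ|` down to a multiple of `q` uses at most `k` atoms and leaves an `ℓ²` error of
at most `√(q ‖θ‖₁) ≤ M / √k`; the spare atoms are spent in cancelling pairs `±e_{j₀}`, which costs
at most one more `q`. The Lipschitz hypothesis turns this `ℓ²` cover into a `d`-cover.
-/

theorem coveringNumber_le_natCard {X ι : Type*} [Finite ι] {d : X → X → ℝ} {A : Set X} {ε : ℝ}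
    (f : ι → X) (hfA : ∀ i, f i ∈ A) (hcover : ∀ a ∈ A, ∃ i, d a (f i) ≤ ε) :
    coveringNumber d A ε ≤ Nat.card ι := by
  classical
  have := Fintype.ofFinite ι
  calc coveringNumber d A ε ≤ (Finset.univ.image f).card :=
        Nat.sInf_le ⟨_, by simpa [Set.subset_def] using hfA, rfl, by simpa using hcover⟩
    _ ≤ Nat.card ι := by rw [Nat.card_eq_fintype_card]; exact Finset.card_image_le

theorem natCard_sum_eq_eq_choose (α : Type*) [Fintype α] (k : ℕ) :
    Nat.card {c : α → ℕ // ∑ a, c a = k} = (Fintype.card α + k - 1).choose k := by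
  classical
  rw [← Nat.card_congr (Sym.equivNatSumOfFintype α k), Nat.card_eq_fintype_card,
    Sym.card_sym_eq_choose]

theorem mul_floor_div_le {t q : ℝ} (ht : 0 ≤ t) (hq : 0 < q) : q * ⌊t / q⌋₊ ≤ t := by
  have := Nat.floor_le (div_nonneg ht hq.le)
  rwa [le_div_iff₀ hq, mul_comm] at this

theorem sq_sub_mul_floor_div_le {t q : ℝ} (ht : 0 ≤ t) (hq : 0 < q) :
    (t - q * ⌊t / q⌋₊) ^ 2 ≤ q * t := by
  have hlow := mul_floor_div_le ht hq
  have hup : t < q * (⌊t / q⌋₊ + 1) := by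
    have := Nat.lt_floor_add_one (t / q)
    rwa [div_lt_iff₀ hq, mul_comm] at this
  have hfloor : (0 : ℝ) ≤ q * ⌊t / q⌋₊ := by positivity
  nlinarith

theorem sqrt_sum_sq_sub_eq_norm {ι : Type*} [Fintype ι] (u w : ι → ℝ) :
    √(∑ j, (u j - w j) ^ 2) = ‖(WithLp.toLp 2 (u - w) : EuclideanSpace ℝ ι)‖ := by
  simp [EuclideanSpace.norm_eq]

namespace SignedCounts

variable {ι : Type*}

/-- `c (j, true)` and `c (j, false)` count the copies of `eⱼ` and of `-eⱼ`. -/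
def point (q : ℝ) (c : ι × Bool → ℕ) : ι → ℝ :=
  fun j => q * ((c (j, true) : ℝ) - c (j, false))

theorem point_add (q : ℝ) (c c' : ι × Bool → ℕ) :
    point q (c + c') = point q c + point q c' := by
  ext j; simp only [point, Pi.add_apply, Nat.cast_add]; ring

theorem sum_eq_sum_true_add_false [Fintype ι] (c : ι × Bool → ℕ) :
    ∑ a, c a = ∑ j, (c (j, true) + c (j, false)) := by
  rw [Fintype.sum_prod_type]; simp [add_comm]

theorem sum_abs_point_le [Fintype ι] {q : ℝ} (hq : 0 ≤ q) (c : ι × Bool → ℕ) :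
    ∑ j, |point q c j| ≤ q * ∑ a, c a := by
  rw [sum_eq_sum_true_add_false, Nat.cast_sum, Finset.mul_sum]
  refine Finset.sum_le_sum fun j _ => ?_
  rw [point, abs_mul, abs_of_nonneg hq, Nat.cast_add]
  gcongr
  exact (abs_sub _ _).trans (by simp)

noncomputable def round (q : ℝ) (θ : ι → ℝ) : ι × Bool → ℕ :=
  fun a => if a.2 = decide (0 ≤ θ a.1) then ⌊|θ a.1| / q⌋₊ else 0

theorem sum_round [Fintype ι] (q : ℝ) (θ : ι → ℝ) : ∑ a, round q θ a = ∑ j, ⌊|θ j| / q⌋₊ := by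
  rw [sum_eq_sum_true_add_false]
  refine Finset.sum_congr rfl fun j _ => ?_
  by_cases h : 0 ≤ θ j <;> simp [round, h]

theorem sq_sub_point_round (q : ℝ) (θ : ι → ℝ) (j : ι) :
    (θ j - point q (round q θ) j) ^ 2 = (|θ j| - q * ⌊|θ j| / q⌋₊) ^ 2 := by
  by_cases h : 0 ≤ θ j
  · simp [point, round, h, abs_of_nonneg h]
  · simp [point, round, h, abs_of_neg (not_le.mp h)]; ring

def pad [DecidableEq ι] (j₀ : ι) (r : ℕ) : ι × Bool → ℕ :=
  fun a => if a.1 = j₀ then (if a.2 then r / 2 + r % 2 else r / 2) else 0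

theorem sum_pad [Fintype ι] [DecidableEq ι] (j₀ : ι) (r : ℕ) : ∑ a, pad j₀ r a = r := by
  rw [sum_eq_sum_true_add_false]
  simp only [pad, if_true, Bool.false_eq_true, if_false, Finset.sum_add_distrib,
    Finset.sum_ite_eq', Finset.mem_univ]
  omega

theorem point_pad [DecidableEq ι] (q : ℝ) (j₀ : ι) (r : ℕ) :
    point q (pad j₀ r) = Pi.single j₀ (q * (r % 2 : ℕ)) := by
  ext j
  by_cases h : j = j₀
  · subst h; simp [point, pad]
  · simp [point, pad, h]

theorem norm_point_pad_le [Fintype ι] [DecidableEq ι] {q : ℝ} (hq : 0 ≤ q) (j₀ : ι) (r : ℕ) :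
    ‖(WithLp.toLp 2 (point q (pad j₀ r)) : EuclideanSpace ℝ ι)‖ ≤ q := by
  rw [point_pad, PiLp.toLp_single, PiLp.norm_single, Real.norm_eq_abs, abs_mul, abs_of_nonneg hq]
  have : ((r % 2 : ℕ) : ℝ) ≤ 1 := by exact_mod_cast (Nat.lt_succ_iff.mp (Nat.mod_lt r two_pos))
  simpa using mul_le_mul_of_nonneg_left this hq

theorem sum_round_le [Fintype ι] {q : ℝ} (hq : 0 < q) {k : ℕ} {θ : ι → ℝ}
    (hθ : ∑ j, |θ j| ≤ k * q) : ∑ a, round q θ a ≤ k := by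
  have : q * ∑ a, round q θ a ≤ q * k := by
    calc q * ∑ a, round q θ a = ∑ j, q * ⌊|θ j| / q⌋₊ := by
          rw [sum_round, Nat.cast_sum, Finset.mul_sum]
      _ ≤ ∑ j, |θ j| := Finset.sum_le_sum fun j _ => mul_floor_div_le (abs_nonneg _) hq
      _ ≤ q * k := by rwa [mul_comm]
  exact_mod_cast le_of_mul_le_mul_left this hq

theorem sqrt_sum_sq_sub_point_round_le [Fintype ι] {q : ℝ} (hq : 0 < q) {k : ℕ} {θ : ι → ℝ}
    (hθ : ∑ j, |θ j| ≤ k * q) : √(∑ j, (θ j - point q (round q θ) j) ^ 2) ≤ q * √k := by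
  have hsq : ∑ j, (θ j - point q (round q θ) j) ^ 2 ≤ q ^ 2 * k := by
    calc ∑ j, (θ j - point q (round q θ) j) ^ 2 ≤ ∑ j, q * |θ j| := by
          simp only [sq_sub_point_round]
          exact Finset.sum_le_sum fun j _ => sq_sub_mul_floor_div_le (abs_nonneg _) hq
      _ ≤ q ^ 2 * k := by rw [← Finset.mul_sum]; nlinarith
  calc √(∑ j, (θ j - point q (round q θ) j) ^ 2) ≤ √(q ^ 2 * k) := Real.sqrt_le_sqrt hsq
    _ = q * √k := by rw [Real.sqrt_mul (sq_nonneg q), Real.sqrt_sq hq.le]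

theorem exists_sum_eq_sqrt_sum_sq_sub_point_le [Fintype ι] [Nonempty ι] {q : ℝ} (hq : 0 < q)
    {k : ℕ} {θ : ι → ℝ} (hθ : ∑ j, |θ j| ≤ k * q) :
    ∃ c : ι × Bool → ℕ, ∑ a, c a = k ∧ √(∑ j, (θ j - point q c j) ^ 2) ≤ q * (√k + 1) := by
  classical
  obtain ⟨j₀⟩ := ‹Nonempty ι›
  have hround := sum_round_le hq hθ
  refine ⟨round q θ + pad j₀ (k - ∑ a, round q θ a), ?_, ?_⟩
  · simp only [Pi.add_apply, Finset.sum_add_distrib, sum_pad]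
    omega
  · calc √(∑ j, (θ j - point q (round q θ + pad j₀ (k - ∑ a, round q θ a)) j) ^ 2)
        = ‖(WithLp.toLp 2 (θ - point q (round q θ)) : EuclideanSpace ℝ ι)
            - WithLp.toLp 2 (point q (pad j₀ (k - ∑ a, round q θ a)))‖ := by
          rw [sqrt_sum_sq_sub_eq_norm, point_add, sub_add_eq_sub_sub, WithLp.toLp_sub]
      _ ≤ q * √k + q := (norm_sub_le _ _).trans <| add_le_add
          (by rw [← sqrt_sum_sq_sub_eq_norm]; exact sqrt_sum_sq_sub_point_round_le hq hθ)
          (norm_point_pad_le hq.le _ _)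
      _ = q * (√k + 1) := by ring

end SignedCounts

open SignedCounts in
theorem covering_number_le_choose_general
    (n l : ℕ) (hl : 0 < l) (M : ℝ) (hM : 0 < M)
    (𝔛 : Type*) (x : Fin n → 𝔛) (φ : (Fin l → ℝ) → 𝔛 → ℝ)
    (A : ℝ) (hA : 0 ≤ A)
    (hcontr : ∀ θ θ' : Fin l → ℝ, (∑ j, |θ j|) ≤ M → (∑ j, |θ' j|) ≤ M →
      Real.sqrt (∑ i, (φ θ (x i) - φ θ' (x i))^2)
        ≤ Real.sqrt n * A * Real.sqrt (∑ j, (θ j - θ' j)^2))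
    (k : ℕ) (hk : 0 < k) :
    coveringNumber (fun θ θ' : Fin l → ℝ => Real.sqrt (∑ i, (φ θ (x i) - φ θ' (x i))^2))
        {θ : Fin l → ℝ | (∑ j, |θ j|) ≤ M}
        (2 * Real.sqrt ((n : ℝ) / k) * A * M)
      ≤ Nat.choose (2 * l + k - 1) k := by
  have : Nonempty (Fin l) := ⟨⟨0, hl⟩⟩
  have : Finite {c : Fin l × Bool → ℕ // ∑ a, c a = k} :=
    Finite.of_equiv _ (Sym.equivNatSumOfFintype (Fin l × Bool) k)
  have hk' : (1 : ℝ) ≤ k := by exact_mod_cast hk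
  set q := M / k
  have hq : 0 < q := by positivity
  have hMq : M = k * q := (mul_div_cancel₀ M (by positivity)).symm
  have hcenter : ∀ c : {c : Fin l × Bool → ℕ // ∑ a, c a = k}, ∑ j, |point q c.1 j| ≤ M := by
    rintro ⟨c, hc⟩
    simpa [hc, hMq, mul_comm] using sum_abs_point_le hq.le c
  have hradius : √n * A * (q * (√k + 1)) ≤ 2 * √(n / k) * A * M := by
    have hsk : 1 ≤ √k := Real.one_le_sqrt.mpr hk'
    calc √n * A * (q * (√k + 1)) ≤ √n * A * (2 * q * √k) :=
        mul_le_mul_of_nonneg_left (by nlinarith) (by positivity)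
      _ = 2 * √(n / k) * A * M := by
        rw [Real.sqrt_div (Nat.cast_nonneg n), hMq]
        field_simp
        rw [Real.sq_sqrt (Nat.cast_nonneg k)]
  calc _ ≤ Nat.card {c : Fin l × Bool → ℕ // ∑ a, c a = k} := by
        refine coveringNumber_le_natCard (fun c => point q c.1) hcenter fun θ hθ => ?_
        obtain ⟨c, hc, hdist⟩ := exists_sum_eq_sqrt_sum_sq_sub_point_le hq (hMq ▸ hθ)
        exact ⟨⟨c, hc⟩, (hcontr θ _ hθ (hcenter ⟨c, hc⟩)).trans <|
          (mul_le_mul_of_nonneg_left hdist (by positivity)).trans hradius⟩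
    _ = _ := by
        rw [natCard_sum_eq_eq_choose, Fintype.card_prod, Fintype.card_fin, Fintype.card_bool,
          mul_comm]

/-- The covering-number estimate of Section 2.2: if `d(θ,θ') ≤ √n A ‖θ−θ'‖₂` on
`Θ = {θ : ‖θ‖₁ ≤ M}`, then for every `k ≥ 1`,
`N(Θ, d, 2 √(n/k) A M) ≤ C(2l + k − 1, k)`. -/
theorem covering_number_le_choose
    (n l : ℕ) (hn : 0 < n) (hl : 0 < l) (M : ℝ) (hM : 0 < M)
    (𝔛 : Type*) (x : Fin n → 𝔛) (φ : (Fin l → ℝ) → 𝔛 → ℝ)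
    (A : ℝ) (hA : 0 ≤ A)
    (hcontr : ∀ θ θ' : Fin l → ℝ, (∑ j, |θ j|) ≤ M → (∑ j, |θ' j|) ≤ M →
      Real.sqrt (∑ i, (φ θ (x i) - φ θ' (x i))^2)
        ≤ Real.sqrt n * A * Real.sqrt (∑ j, (θ j - θ' j)^2))
    (k : ℕ) (hk : 0 < k) :
    coveringNumber (fun θ θ' : Fin l → ℝ => Real.sqrt (∑ i, (φ θ (x i) - φ θ' (x i))^2))
        {θ : Fin l → ℝ | (∑ j, |θ j|) ≤ M}
        (2 * Real.sqrt ((n : ℝ) / k) * A * M)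
      ≤ Nat.choose (2 * l + k - 1) k :=
  covering_number_le_choose_general n l hl M hM 𝔛 x φ A hA hcontr k hk
end

section
/- Suppose there exists A > 0 with d(θ,θ') ≤ √n · A · ‖θ − θ'‖₂ for all θ, θ' ∈ Θ. Then for every ε > 0, the covering number satisfies N(Θ, d, ε) ≤ ( e + e·l·ε² / (2·n·M²·A²) )^{4·n·M²·A²/ε² + 1}. -/
open MeasureTheory Real

/-!
Maurey's empirical method. If no linear functional separates `θ` from the points `v i`, then
adding the points one at a time, each chosen so that it does not point away from the current
error `∑ (v i - θ)`, keeps the squared error at most `k D²` after `k` steps; so `θ` lies within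
`D / √k` of the mean of a multiset of `k` of the points. For the `ℓ¹` ball of radius `M`, the
points are the `2l` vertices `±M eⱼ` and `D = 2M`, so the means of the multisets of `k` vertices
form a `2M/√k`-net in `ℓ²`, with at most `multichoose (2l) k ≤ (e + 2el/k)^k` points. The
Lipschitz hypothesis makes it an `ε`-net for `d` as soon as `k ≥ 4nM²A²/ε²`; take
`k = ⌈4nM²A²/ε²⌉`.
-/

open scoped RealInnerProductSpace

theorem coveringNumber_le_card {X : Type*} {d : X → X → ℝ} {T : Set X} {ε : ℝ} (S : Finset X)
    (hST : ↑S ⊆ T) (hcover : ∀ θ ∈ T, ∃ s ∈ S, d θ s ≤ ε) : coveringNumber d T ε ≤ S.card :=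
  Nat.sInf_le ⟨S, hST, rfl, hcover⟩

theorem Nat.choose_le_exp_one_mul_div_pow (n k : ℕ) :
    (n.choose k : ℝ) ≤ (exp 1 * n / k) ^ k := by
  rcases k.eq_zero_or_pos with rfl | hk
  · simp
  have hk' : (0 : ℝ) < k := by exact_mod_cast hk
  have hfact : (k : ℝ) ^ k / k.factorial ≤ exp 1 ^ k := by
    simpa [← Real.exp_nat_mul] using Real.pow_div_factorial_le_exp (k : ℝ) hk'.le k
  calc (n.choose k : ℝ) ≤ (n : ℝ) ^ k / k.factorial := Nat.choose_le_pow_div k n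
    _ = ((n : ℝ) / k) ^ k * ((k : ℝ) ^ k / k.factorial) := by
        rw [div_pow]; field_simp
    _ ≤ ((n : ℝ) / k) ^ k * exp 1 ^ k := by gcongr
    _ = (exp 1 * n / k) ^ k := by rw [mul_div_assoc, mul_pow, mul_comm]

theorem Nat.multichoose_le_exp_one_add_pow (m k : ℕ) :
    (m.multichoose k : ℝ) ≤ (exp 1 + exp 1 * m / k) ^ k := by
  rcases k.eq_zero_or_pos with rfl | hk
  · simp
  calc (m.multichoose k : ℝ) ≤ ((m + k).choose k : ℝ) := by
        rw [Nat.multichoose_eq]; exact_mod_cast Nat.choose_le_choose k (Nat.sub_le _ _)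
    _ ≤ (exp 1 * (m + k : ℕ) / k) ^ k := Nat.choose_le_exp_one_mul_div_pow _ _
    _ = (exp 1 + exp 1 * m / k) ^ k := by
        have hk' : (k : ℝ) ≠ 0 := by positivity
        push_cast; field_simp; ring

section Maurey

variable {ι E : Type*} [NormedAddCommGroup E] [InnerProductSpace ℝ E]

theorem exists_sym_norm_sum_sub_sq_le (v : ι → E) (θ : E) {D : ℝ}
    (hD : ∀ i, ‖v i - θ‖ ≤ D) (hθ : ∀ w : E, ∃ i, ⟪w, v i - θ⟫ ≤ 0) (k : ℕ) :
    ∃ s : Sym ι k, ‖((s : Multiset ι).map fun i => v i - θ).sum‖ ^ 2 ≤ k * D ^ 2 := by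
  induction k with
  | zero => exact ⟨Sym.nil, by simp⟩
  | succ k ih =>
    obtain ⟨s, hs⟩ := ih
    set T := ((s : Multiset ι).map fun i => v i - θ).sum
    obtain ⟨i, hi⟩ := hθ T
    refine ⟨i ::ₛ s, ?_⟩
    have hvi : ‖v i - θ‖ ^ 2 ≤ D ^ 2 := pow_le_pow_left₀ (norm_nonneg _) (hD i) 2
    rw [Sym.coe_cons, Multiset.map_cons, Multiset.sum_cons, norm_add_sq_real, real_inner_comm]
    push_cast
    linarith

noncomputable def symMean (v : ι → E) {k : ℕ} (s : Sym ι k) : E :=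
  (k : ℝ)⁻¹ • ((s : Multiset ι).map v).sum

theorem exists_sym_dist_symMean_le (v : ι → E) (θ : E) {D : ℝ}
    (hD : ∀ i, ‖v i - θ‖ ≤ D) (hθ : ∀ w : E, ∃ i, ⟪w, v i - θ⟫ ≤ 0) {k : ℕ} (hk : 0 < k) :
    ∃ s : Sym ι k, dist θ (symMean v s) ≤ D / √k := by
  obtain ⟨s, hs⟩ := exists_sym_norm_sum_sub_sq_le v θ hD hθ k
  refine ⟨s, ?_⟩
  have hD0 : 0 ≤ D := (norm_nonneg _).trans (hD (hθ 0).choose)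
  have hk' : (0 : ℝ) < k := by exact_mod_cast hk
  have hmean : symMean v s - θ = (k : ℝ)⁻¹ • ((s : Multiset ι).map fun i => v i - θ).sum := by
    rw [Multiset.sum_map_sub, Multiset.map_const', Multiset.sum_replicate, Sym.card_coe,
      smul_sub, symMean, ← Nat.cast_smul_eq_nsmul ℝ, smul_smul, inv_mul_cancel₀ hk'.ne', one_smul]
  have hT : ‖((s : Multiset ι).map fun i => v i - θ).sum‖ ≤ √k * D := by
    rw [← Real.sqrt_sq hD0, ← Real.sqrt_mul hk'.le]
    exact Real.le_sqrt_of_sq_le hs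
  calc dist θ (symMean v s) = (k : ℝ)⁻¹ * ‖((s : Multiset ι).map fun i => v i - θ).sum‖ := by
        rw [dist_comm, dist_eq_norm, hmean, norm_smul, Real.norm_of_nonneg (by positivity)]
    _ ≤ (k : ℝ)⁻¹ * (√k * D) := by gcongr
    _ = D / √k := by
        have hsk : (0 : ℝ) < √k := Real.sqrt_pos.2 hk'
        field_simp
        rw [Real.sq_sqrt hk'.le]

end Maurey

section L1Ball

variable {ι : Type*} [Fintype ι]

theorem norm_toLp_le_sum_abs (θ : ι → ℝ) :
    ‖(WithLp.toLp 2 θ : EuclideanSpace ℝ ι)‖ ≤ ∑ j, |θ j| := by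
  refine le_of_sq_le_sq ?_ (by positivity)
  rw [EuclideanSpace.norm_sq_eq]
  simpa using Finset.sum_sq_le_sq_sum_of_nonneg (fun j _ => abs_nonneg (θ j))

variable [DecidableEq ι]

noncomputable def l1BallVertex (M : ℝ) (p : ι × Bool) : EuclideanSpace ℝ ι :=
  EuclideanSpace.single p.1 (if p.2 then M else -M)

theorem sum_abs_l1BallVertex {M : ℝ} (hM : 0 ≤ M) (p : ι × Bool) :
    ∑ j, |l1BallVertex M p j| = M := by
  rcases p with ⟨i, _ | _⟩ <;> simp [l1BallVertex, apply_ite, abs_of_nonneg hM]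

theorem norm_l1BallVertex_sub_le {M : ℝ} {θ : ι → ℝ} (hθ : ∑ j, |θ j| ≤ M) (p : ι × Bool) :
    ‖l1BallVertex M p - WithLp.toLp 2 θ‖ ≤ 2 * M := by
  have hM : 0 ≤ M := (Finset.sum_nonneg fun j _ => abs_nonneg (θ j)).trans hθ
  have hvertex : ‖l1BallVertex M p‖ = M := by
    rcases p with ⟨i, _ | _⟩ <;> simp [l1BallVertex, abs_of_nonneg hM]
  calc ‖l1BallVertex M p - WithLp.toLp 2 θ‖
      ≤ ‖l1BallVertex M p‖ + ‖(WithLp.toLp 2 θ : EuclideanSpace ℝ ι)‖ := norm_sub_le _ _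
    _ ≤ M + M := by rw [hvertex]; gcongr; exact (norm_toLp_le_sum_abs θ).trans hθ
    _ = 2 * M := by ring

theorem exists_inner_l1BallVertex_sub_nonpos [Nonempty ι] {M : ℝ} {θ : ι → ℝ}
    (hθ : ∑ j, |θ j| ≤ M) (w : EuclideanSpace ℝ ι) :
    ∃ p, ⟪w, l1BallVertex M p - WithLp.toLp 2 θ⟫ ≤ 0 := by
  obtain ⟨j₀, hj₀⟩ := Finite.exists_max fun j => |w j|
  refine ⟨(j₀, decide (w j₀ < 0)), ?_⟩
  have hvertex : ⟪w, l1BallVertex M (j₀, decide (w j₀ < 0))⟫ = -(M * |w j₀|) := by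
    by_cases h : w j₀ < 0
    · simp [l1BallVertex, EuclideanSpace.inner_single_right, h, abs_of_neg h]
    · simp [l1BallVertex, EuclideanSpace.inner_single_right, h, abs_of_nonneg (not_lt.1 h)]
  have hθw : -⟪w, WithLp.toLp 2 θ⟫ ≤ M * |w j₀| :=
    calc -⟪w, WithLp.toLp 2 θ⟫ ≤ |∑ j, θ j * w j| := by
          rw [PiLp.inner_apply]; simpa using neg_le_abs _
      _ ≤ ∑ j, |θ j| * |w j₀| := by
          refine (Finset.abs_sum_le_sum_abs _ _).trans (Finset.sum_le_sum fun j _ => ?_)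
          rw [abs_mul]; exact mul_le_mul_of_nonneg_left (hj₀ j) (abs_nonneg _)
      _ ≤ M * |w j₀| := by rw [← Finset.sum_mul]; gcongr
  rw [inner_sub_right, hvertex]
  linarith

theorem sum_abs_symMean_l1BallVertex_le {M : ℝ} (hM : 0 ≤ M) {k : ℕ} (s : Sym (ι × Bool) k) :
    ∑ j, |symMean (l1BallVertex M) s j| ≤ M := by
  set l1 : EuclideanSpace ℝ ι → ℝ := fun x => ∑ j, |x j|
  have hsum : l1 ((s : Multiset (ι × Bool)).map (l1BallVertex M)).sum ≤ k * M := by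
    refine (Multiset.le_sum_of_subadditive l1 (by simp [l1]) (fun x y => ?_) _).trans ?_
    · simpa only [l1, PiLp.add_apply, ← Finset.sum_add_distrib] using
        Finset.sum_le_sum fun j _ => abs_add_le (x j) (y j)
    · simp [l1, Multiset.map_map, sum_abs_l1BallVertex hM]
  calc ∑ j, |symMean (l1BallVertex M) s j|
      = (k : ℝ)⁻¹ * l1 ((s : Multiset (ι × Bool)).map (l1BallVertex M)).sum := by
        simp [symMean, l1, abs_mul, Finset.mul_sum]
    _ ≤ (k : ℝ)⁻¹ * (k * M) := by gcongr
    _ ≤ M := by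
        rw [← mul_assoc]
        exact mul_le_of_le_one_left hM (inv_mul_le_one_of_le₀ le_rfl (Nat.cast_nonneg k))

theorem coveringNumber_l1Ball_le_multichoose [Nonempty ι] {M L ε : ℝ} (hM : 0 ≤ M) (hL : 0 ≤ L)
    (d : (ι → ℝ) → (ι → ℝ) → ℝ)
    (hd : ∀ θ θ' : ι → ℝ, ∑ j, |θ j| ≤ M → ∑ j, |θ' j| ≤ M →
      d θ θ' ≤ L * √(∑ j, (θ j - θ' j) ^ 2))
    {k : ℕ} (hk : 0 < k) (hkε : 2 * M * L ≤ ε * √k) :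
    coveringNumber d {θ | ∑ j, |θ j| ≤ M} ε ≤ (2 * Fintype.card ι).multichoose k := by
  set net : Sym (ι × Bool) k → ι → ℝ := fun s => (symMean (l1BallVertex M) s).ofLp
  have hnet : ∀ s, ∑ j, |net s j| ≤ M := sum_abs_symMean_l1BallVertex_le hM
  calc coveringNumber d {θ | ∑ j, |θ j| ≤ M} ε ≤ (Finset.univ.image net).card := by
        refine coveringNumber_le_card _ (by simpa [Set.subset_def] using hnet) fun θ hθ => ?_
        obtain ⟨s, hs⟩ := exists_sym_dist_symMean_le (l1BallVertex M) (WithLp.toLp 2 θ)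
          (norm_l1BallVertex_sub_le hθ) (exists_inner_l1BallVertex_sub_nonpos hθ) hk
        refine ⟨net s, Finset.mem_image_of_mem net (Finset.mem_univ s), ?_⟩
        have hk' : (0 : ℝ) < √k := Real.sqrt_pos.2 (Nat.cast_pos.2 hk)
        calc d θ (net s) ≤ L * √(∑ j, (θ j - net s j) ^ 2) := hd θ _ hθ (hnet s)
          _ = L * dist (WithLp.toLp 2 θ) (symMean (l1BallVertex M) s) := by
              simp [EuclideanSpace.dist_eq, Real.dist_eq, net]
          _ ≤ L * (2 * M / √k) := by gcongr
          _ ≤ ε := by rw [mul_div_assoc', div_le_iff₀ hk']; linarith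
    _ ≤ Fintype.card (Sym (ι × Bool) k) := Finset.card_image_le.trans_eq Finset.card_univ
    _ = (2 * Fintype.card ι).multichoose k := by
        rw [Sym.card_sym_eq_multichoose, Fintype.card_prod, Fintype.card_bool, mul_comm]

end L1Ball

/-- The covering-number estimate of Section 2.2: if `d(θ,θ') ≤ √n A ‖θ−θ'‖₂` on
`Θ = {θ : ‖θ‖₁ ≤ M}` with `A > 0`, then for every `ε > 0`,
`N(Θ, d, ε) ≤ (e + e l ε² / (2 n M² A²)) ^ (4 n M² A² / ε² + 1)`. -/
theorem covering_number_bound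
    (n l : ℕ) (hn : 0 < n) (hl : 0 < l) (M : ℝ) (hM : 0 < M)
    (𝔛 : Type*) (x : Fin n → 𝔛) (φ : (Fin l → ℝ) → 𝔛 → ℝ)
    (A : ℝ) (hA : 0 < A)
    (hcontr : ∀ θ θ' : Fin l → ℝ, (∑ j, |θ j|) ≤ M → (∑ j, |θ' j|) ≤ M →
      Real.sqrt (∑ i, (φ θ (x i) - φ θ' (x i))^2)
        ≤ Real.sqrt n * A * Real.sqrt (∑ j, (θ j - θ' j)^2))
    (ε : ℝ) (hε : 0 < ε) :
    (coveringNumber (fun θ θ' : Fin l → ℝ => Real.sqrt (∑ i, (φ θ (x i) - φ θ' (x i))^2))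
        {θ : Fin l → ℝ | (∑ j, |θ j|) ≤ M} ε : ℝ)
      ≤ (Real.exp 1 + Real.exp 1 * l * ε^2 / (2 * n * M^2 * A^2))
          ^ ((4 * n * M^2 * A^2 / ε^2 + 1) : ℝ) := by
  set B := 4 * n * M ^ 2 * A ^ 2 / ε ^ 2 with hB
  have hB0 : 0 < B := by positivity
  set k := ⌈B⌉₊
  have hBk : B ≤ k := Nat.le_ceil B
  have hk : 0 < k := Nat.ceil_pos.2 hB0
  have hkε : 2 * M * (√n * A) ≤ ε * √k := by
    refine le_of_sq_le_sq ?_ (by positivity)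
    calc (2 * M * (√n * A)) ^ 2 = ε ^ 2 * B := by
          rw [hB, mul_pow, mul_pow, mul_pow, Real.sq_sqrt (Nat.cast_nonneg n)]; field_simp; ring
      _ ≤ ε ^ 2 * k := by gcongr
      _ = (ε * √k) ^ 2 := by rw [mul_pow, Real.sq_sqrt (Nat.cast_nonneg k)]
  have : Nonempty (Fin l) := Fin.pos_iff_nonempty.1 hl
  have hcover := coveringNumber_l1Ball_le_multichoose hM.le (by positivity) _ hcontr hk hkε
  rw [Fintype.card_fin] at hcover
  have hC : 1 ≤ exp 1 + exp 1 * l * ε ^ 2 / (2 * n * M ^ 2 * A ^ 2) := by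
    have := Real.add_one_le_exp 1
    have : 0 ≤ exp 1 * l * ε ^ 2 / (2 * n * M ^ 2 * A ^ 2) := by positivity
    linarith
  calc _ ≤ ((2 * l).multichoose k : ℝ) := by exact_mod_cast hcover
    _ ≤ (exp 1 + exp 1 * (2 * l : ℕ) / k) ^ k := Nat.multichoose_le_exp_one_add_pow _ _
    _ ≤ (exp 1 + exp 1 * l * ε ^ 2 / (2 * n * M ^ 2 * A ^ 2)) ^ k := by
        gcongr (exp 1 + ?_) ^ _
        calc exp 1 * (2 * l : ℕ) / k ≤ exp 1 * (2 * l : ℕ) / B := by gcongr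
          _ = exp 1 * l * ε ^ 2 / (2 * n * M ^ 2 * A ^ 2) := by rw [hB]; push_cast; field_simp; ring
    _ ≤ _ := by
        rw [← Real.rpow_natCast]
        exact Real.rpow_le_rpow_of_exponent_le hC (Nat.ceil_lt_add_one hB0.le).le
end

section
/- Suppose there exists A > 0 with d(θ,θ') ≤ √n · A · ‖θ − θ'‖₂ for all θ, θ' ∈ Θ. Then for every ε > 0, the packing number satisfies D(Θ, d, ε) ≤ ( e + e·l·ε² / (8·n·M²·A²) )^{16·n·M²·A²/ε² + 1}. -/
/-! Maurey's empirical method: a point `θ` of the ℓ¹-ball of radius `M` is a convex combination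
of the `2l + 1` points `0, ±M eⱼ`, and picking these points one at a time so as to keep the
running error small yields a multiset of `k` of them whose sum is within `√k M` of `k θ` in ℓ².
Two points of the ball sharing such a multiset are `2M/√k`-close in ℓ², hence `ε`-close for `d`
when `k = ⌈16 n M² A² / ε²⌉`. An `ε`-separated set therefore injects into the multisets of size
`k`, of which there are `(2l + k).choose k ≤ (e (2l + k) / k)^k`. -/

open MeasureTheory Real

/-- The packing number `D(A, d, ε)`: the maximal cardinality of a subset of `A` whose
points have pairwise `d`-distance strictly greater than `ε`. -/
noncomputable def packingNumber {X : Type*} (d : X → X → ℝ) (A : Set X) (ε : ℝ) : ℕ :=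
  sSup {m : ℕ | ∃ S : Finset X, ↑S ⊆ A ∧ (∀ s ∈ S, ∀ t ∈ S, s ≠ t → ε < d s t) ∧
    S.card = m}

open Finset

section Maurey

variable {E : Type*} [NormedAddCommGroup E] [InnerProductSpace ℝ E] {ι : Type*} [Fintype ι]
  {w : ι → ℝ} {v : ι → E} {θ : E}

lemma sum_mul_norm_add_sub_sq (hw : ∑ a, w a = 1) (hθ : ∑ a, w a • v a = θ) (u : E) :
    ∑ a, w a * ‖u + (v a - θ)‖ ^ 2 = ‖u‖ ^ 2 + ∑ a, w a * ‖v a‖ ^ 2 - ‖θ‖ ^ 2 := by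
  have hu : ∑ a, w a * inner ℝ u (v a) = inner ℝ u θ := by
    simp [← hθ, inner_sum, real_inner_smul_right]
  have hθθ : ∑ a, w a * inner ℝ (v a) θ = ‖θ‖ ^ 2 := by
    rw [← real_inner_self_eq_norm_sq]
    nth_rw 2 [← hθ]
    simp [sum_inner, real_inner_smul_left]
  have hexpand : ∀ a, w a * ‖u + (v a - θ)‖ ^ 2 = w a * ‖u‖ ^ 2 + 2 * (w a * inner ℝ u (v a))
      - 2 * w a * inner ℝ u θ + w a * ‖v a‖ ^ 2 - 2 * (w a * inner ℝ (v a) θ) + w a * ‖θ‖ ^ 2 := by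
    intro a
    rw [norm_add_sq_real, norm_sub_sq_real, inner_sub_right]
    ring
  simp only [hexpand, sum_add_distrib, sum_sub_distrib, ← mul_sum, ← sum_mul, hw, hu, hθθ]
  ring

lemma exists_le_of_sum_mul_le {g : ι → ℝ} {c : ℝ} (hw0 : ∀ a, 0 ≤ w a) (hw1 : ∑ a, w a = 1)
    (h : ∑ a, w a * g a ≤ c) : ∃ a, g a ≤ c := by
  obtain ⟨a, -, ha⟩ := (concaveOn_id convex_univ).exists_le_of_centerMass
    (t := univ) (w := w) (p := g) (fun a _ => hw0 a) (by rw [hw1]; exact one_pos) (by simp)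
  refine ⟨a, ha.trans ?_⟩
  simpa [centerMass, hw1] using h

theorem exists_sym_norm_sum_sub_smul_sq_le (hw0 : ∀ a, 0 ≤ w a) (hw1 : ∑ a, w a = 1)
    (hθ : ∑ a, w a • v a = θ) {R : ℝ} (hv : ∀ a, ‖v a‖ ≤ R) (k : ℕ) :
    ∃ s : Sym ι k, ‖(s.1.map v).sum - (k : ℝ) • θ‖ ^ 2 ≤ k * R ^ 2 := by
  induction k with
  | zero => exact ⟨Sym.nil, by simp⟩
  | succ k ih =>
    obtain ⟨s, hs⟩ := ih
    have hvR : ∑ a, w a * ‖v a‖ ^ 2 ≤ R ^ 2 := by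
      calc ∑ a, w a * ‖v a‖ ^ 2 ≤ ∑ a, w a * R ^ 2 := by
            gcongr with a; exact hw0 a; exact hv a
        _ = R ^ 2 := by rw [← sum_mul, hw1, one_mul]
    -- averaging over the next point drawn with law `w` adds at most `R²` to the squared error
    obtain ⟨a, ha⟩ := exists_le_of_sum_mul_le hw0 hw1 (c := (k + 1) * R ^ 2)
      (g := fun a => ‖((s.1.map v).sum - (k : ℝ) • θ) + (v a - θ)‖ ^ 2) (by
        rw [sum_mul_norm_add_sub_sq hw1 hθ]
        nlinarith [sq_nonneg ‖θ‖])
    refine ⟨a ::ₛ s, ?_⟩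
    convert ha using 3
    · simp only [Sym.val_eq_coe, Sym.coe_cons, Multiset.map_cons, Multiset.sum_cons]
      push_cast
      module
    · push_cast; ring

end Maurey

section L1Ball

noncomputable def l1Vertex {l : ℕ} (M : ℝ) : Option (Fin l × Bool) → EuclideanSpace ℝ (Fin l)
  | none => 0
  | some (j, b) => EuclideanSpace.single j (if b then M else -M)

variable {l : ℕ} {M : ℝ}

lemma norm_l1Vertex_le (hM : 0 ≤ M) (a : Option (Fin l × Bool)) : ‖l1Vertex M a‖ ≤ M := by
  rcases a with _ | ⟨j, _ | _⟩ <;> simp [l1Vertex, abs_of_nonneg, hM]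

lemma exists_weights_sum_smul_l1Vertex_eq (hM : 0 < M) (θ : EuclideanSpace ℝ (Fin l))
    (hθ : ∑ j, |θ j| ≤ M) :
    ∃ w : Option (Fin l × Bool) → ℝ,
      (∀ a, 0 ≤ w a) ∧ ∑ a, w a = 1 ∧ ∑ a, w a • l1Vertex M a = θ := by
  refine ⟨fun
    | none => 1 - (∑ j, |θ j|) / M
    | some (j, b) => (if b then (θ j)⁺ else (θ j)⁻) / M, ?_, ?_, ?_⟩
  · rintro (_ | ⟨j, _ | _⟩)
    · simpa [div_le_one hM] using hθ
    · simp only; positivity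
    · simp only; positivity
  · simp [Fintype.sum_option, Fintype.sum_prod_type, posPart_add_negPart, ← sum_div]
  · ext i
    simp [Fintype.sum_option, Fintype.sum_prod_type, l1Vertex, Pi.single_apply, hM.ne',
      sum_add_distrib, ← sub_eq_add_neg]

lemma exists_sym_norm_sum_l1Vertex_sub_smul_sq_le (hM : 0 < M) (θ : EuclideanSpace ℝ (Fin l))
    (hθ : ∑ j, |θ j| ≤ M) (k : ℕ) :
    ∃ s : Sym (Option (Fin l × Bool)) k,
      ‖(s.1.map (l1Vertex M)).sum - (k : ℝ) • θ‖ ^ 2 ≤ k * M ^ 2 := by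
  obtain ⟨w, hw0, hw1, hwθ⟩ := exists_weights_sum_smul_l1Vertex_eq hM θ hθ
  exact exists_sym_norm_sum_sub_smul_sq_le hw0 hw1 hwθ (norm_l1Vertex_le hM.le) k

end L1Ball

lemma sq_mul_norm_sub_sq_le {E : Type*} [NormedAddCommGroup E] [NormedSpace ℝ E] {c s t : E}
    {k r : ℝ} (hs : ‖c - k • s‖ ^ 2 ≤ r) (ht : ‖c - k • t‖ ^ 2 ≤ r) :
    k ^ 2 * ‖s - t‖ ^ 2 ≤ 4 * r := by
  have htri : |k| * ‖s - t‖ ≤ ‖c - k • s‖ + ‖c - k • t‖ := by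
    rw [← Real.norm_eq_abs, ← norm_smul, smul_sub]
    exact norm_sub_le_norm_sub_add_norm_sub _ c _ |>.trans_eq (by rw [norm_sub_rev])
  have := pow_le_pow_left₀ (by positivity) htri 2
  nlinarith [sq_abs k, sq_nonneg (‖c - k • s‖ - ‖c - k • t‖)]

lemma packingNumber_le_card_of_map {X Y : Type*} [Fintype Y] {d : X → X → ℝ} {T : Set X}
    {ε : ℝ} (F : X → Y) (hF : ∀ s ∈ T, ∀ t ∈ T, F s = F t → d s t ≤ ε) :
    packingNumber d T ε ≤ Fintype.card Y := by
  refine csSup_le' ?_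
  rintro _ ⟨S, hST, hsep, rfl⟩
  refine card_le_card_of_injOn F (fun _ _ => mem_coe.2 (mem_univ _)) fun s hs t ht hst => ?_
  by_contra hne
  exact (hsep s hs t ht hne).not_ge (hF s (hST hs) t (hST ht) hst)

theorem packingNumber_l1Ball_le_choose {l : ℕ} {M : ℝ} (hM : 0 < M)
    {d : (Fin l → ℝ) → (Fin l → ℝ) → ℝ} {ε : ℝ} (k : ℕ)
    (hd : ∀ s, ∑ j, |s j| ≤ M → ∀ t, ∑ j, |t j| ≤ M →
      k * ∑ j, (s j - t j) ^ 2 ≤ 4 * M ^ 2 → d s t ≤ ε) :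
    packingNumber d {θ | ∑ j, |θ j| ≤ M} ε ≤ (2 * l + k).choose k := by
  have happrox : ∀ θ : Fin l → ℝ, ∑ j, |θ j| ≤ M → ∃ s : Sym (Option (Fin l × Bool)) k,
      ‖(s.1.map (l1Vertex M)).sum - (k : ℝ) • WithLp.toLp 2 θ‖ ^ 2 ≤ k * M ^ 2 :=
    fun θ hθ => exists_sym_norm_sum_l1Vertex_sub_smul_sq_le hM _ (by simpa using hθ) k
  choose! F hF using happrox
  refine (packingNumber_le_card_of_map F fun s hs t ht hst => hd s hs t ht ?_).trans_eq ?_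
  · have hst := sq_mul_norm_sub_sq_le (hF s hs) (hst ▸ hF t ht)
    rw [EuclideanSpace.norm_sq_eq] at hst
    simp only [← WithLp.toLp_sub, PiLp.toLp_apply, Pi.sub_apply, Real.norm_eq_abs, sq_abs] at hst
    rcases k.eq_zero_or_pos with rfl | hk
    · rw [Nat.cast_zero, zero_mul]; positivity
    · exact le_of_mul_le_mul_left (by linarith) (by positivity : (0 : ℝ) < k)
  · rw [Sym.card_sym_eq_choose]
    simp [mul_comm]

lemma choose_add_le_exp_mul_div_pow (m k : ℕ) :
    ((m + k).choose k : ℝ) ≤ (exp 1 * (m + k) / k) ^ k := by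
  have hkk : (k : ℝ) ^ k / k.factorial ≤ exp 1 ^ k := by
    rw [exp_one_pow]; exact pow_div_factorial_le_exp _ k.cast_nonneg k
  have hk : (k : ℝ) ^ k ≠ 0 := by exact_mod_cast k.pow_self_pos.ne'
  calc ((m + k).choose k : ℝ) ≤ ((m + k : ℕ) : ℝ) ^ k / k.factorial := Nat.choose_le_pow_div k _
    _ = ((m + k) / k) ^ k * ((k : ℝ) ^ k / k.factorial) := by
        rw [div_pow, div_mul_div_comm, mul_comm ((k : ℝ) ^ k) (k.factorial : ℝ),
          mul_div_mul_right _ _ hk]; push_cast; rfl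
    _ ≤ ((m + k) / k) ^ k * exp 1 ^ k := by gcongr
    _ = (exp 1 * (m + k) / k) ^ k := by rw [← mul_pow]; ring

lemma choose_add_ceil_le_rpow (m : ℕ) {K : ℝ} (hK : 0 < K) :
    ((m + ⌈K⌉₊).choose ⌈K⌉₊ : ℝ) ≤ (exp 1 + exp 1 * m / K) ^ (K + 1) := by
  have hk : (0 : ℝ) < ⌈K⌉₊ := Nat.cast_pos.2 (Nat.ceil_pos.2 hK)
  have hB : 1 ≤ exp 1 + exp 1 * m / K := by
    have : 0 ≤ exp 1 * m / K := by positivity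
    linarith [one_le_exp zero_le_one]
  calc ((m + ⌈K⌉₊).choose ⌈K⌉₊ : ℝ) ≤ (exp 1 * (m + ⌈K⌉₊) / ⌈K⌉₊) ^ ⌈K⌉₊ :=
        choose_add_le_exp_mul_div_pow m _
    _ = (exp 1 + exp 1 * m / ⌈K⌉₊) ^ ⌈K⌉₊ := by
        rw [mul_add, add_div, mul_div_cancel_right₀ _ hk.ne', add_comm]
    _ ≤ (exp 1 + exp 1 * m / K) ^ ⌈K⌉₊ := by gcongr; exact Nat.le_ceil K
    _ = (exp 1 + exp 1 * m / K) ^ (⌈K⌉₊ : ℝ) := (rpow_natCast _ _).symm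
    _ ≤ (exp 1 + exp 1 * m / K) ^ (K + 1) :=
        rpow_le_rpow_of_exponent_le hB (Nat.ceil_lt_add_one hK.le).le

theorem packing_number_bound_general
    (n l : ℕ) (hn : 0 < n) (M : ℝ) (hM : 0 < M)
    (𝔛 : Type*) (x : Fin n → 𝔛) (φ : (Fin l → ℝ) → 𝔛 → ℝ)
    (A : ℝ) (hA : 0 < A)
    (hcontr : ∀ θ θ' : Fin l → ℝ, (∑ j, |θ j|) ≤ M → (∑ j, |θ' j|) ≤ M →
      Real.sqrt (∑ i, (φ θ (x i) - φ θ' (x i))^2)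
        ≤ Real.sqrt n * A * Real.sqrt (∑ j, (θ j - θ' j)^2))
    (ε : ℝ) (hε : 0 < ε) :
    (packingNumber (fun θ θ' : Fin l → ℝ => Real.sqrt (∑ i, (φ θ (x i) - φ θ' (x i))^2))
        {θ : Fin l → ℝ | (∑ j, |θ j|) ≤ M} ε : ℝ)
      ≤ (Real.exp 1 + Real.exp 1 * l * ε^2 / (8 * n * M^2 * A^2))
          ^ ((16 * n * M^2 * A^2 / ε^2 + 1) : ℝ) := by
  set K : ℝ := 16 * n * M ^ 2 * A ^ 2 / ε ^ 2 with hK_def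
  have hK : 0 < K := by positivity
  have hclose : ∀ Q, 0 ≤ Q → ⌈K⌉₊ * Q ≤ 4 * M ^ 2 → √n * A * √Q ≤ ε := by
    intro Q hQ hkQ
    have hKQ : K * Q ≤ 4 * M ^ 2 := (mul_le_mul_of_nonneg_right (Nat.le_ceil K) hQ).trans hkQ
    rw [hK_def, div_mul_eq_mul_div, div_le_iff₀ (by positivity)] at hKQ
    rw [← sqrt_sq hA.le, ← sqrt_mul n.cast_nonneg, ← sqrt_mul (by positivity), ← sqrt_sq hε.le]
    exact sqrt_le_sqrt (by nlinarith [pow_pos hM 2, pow_pos hε 2])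
  have hpack := packingNumber_l1Ball_le_choose hM ⌈K⌉₊
    (d := fun θ θ' => √(∑ i, (φ θ (x i) - φ θ' (x i)) ^ 2))
    fun s hs t ht hst => (hcontr s t hs ht).trans (hclose _ (by positivity) hst)
  calc (packingNumber _ _ ε : ℝ) ≤ (2 * l + ⌈K⌉₊).choose ⌈K⌉₊ := by exact_mod_cast hpack
    _ ≤ (exp 1 + exp 1 * (2 * l : ℕ) / K) ^ (K + 1) := choose_add_ceil_le_rpow (2 * l) hK
    _ = _ := by rw [hK_def]; push_cast; congr 2; field_simp; ring

/-- The packing-number estimate of Section 2.2: if `d(θ,θ') ≤ √n A ‖θ−θ'‖₂` on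
`Θ = {θ : ‖θ‖₁ ≤ M}` with `A > 0`, then for every `ε > 0`,
`D(Θ, d, ε) ≤ (e + e l ε² / (8 n M² A²)) ^ (16 n M² A² / ε² + 1)`. -/
theorem packing_number_bound
    (n l : ℕ) (hn : 0 < n) (hl : 0 < l) (M : ℝ) (hM : 0 < M)
    (𝔛 : Type*) (x : Fin n → 𝔛) (φ : (Fin l → ℝ) → 𝔛 → ℝ)
    (A : ℝ) (hA : 0 < A)
    (hcontr : ∀ θ θ' : Fin l → ℝ, (∑ j, |θ j|) ≤ M → (∑ j, |θ' j|) ≤ M →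
      Real.sqrt (∑ i, (φ θ (x i) - φ θ' (x i))^2)
        ≤ Real.sqrt n * A * Real.sqrt (∑ j, (θ j - θ' j)^2))
    (ε : ℝ) (hε : 0 < ε) :
    (packingNumber (fun θ θ' : Fin l → ℝ => Real.sqrt (∑ i, (φ θ (x i) - φ θ' (x i))^2))
        {θ : Fin l → ℝ | (∑ j, |θ j|) ≤ M} ε : ℝ)
      ≤ (Real.exp 1 + Real.exp 1 * l * ε^2 / (8 * n * M^2 * A^2))
          ^ ((16 * n * M^2 * A^2 / ε^2 + 1) : ℝ) :=
  packing_number_bound_general n l hn M hM 𝔛 x φ A hA hcontr ε hε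
end

section
/- Suppose there exists A ≥ 0 with d(θ,θ') ≤ √n · A · ‖θ − θ'‖₂ for all θ, θ' ∈ Θ. Fix λ ∈ ℝ^{2l} with ‖λ‖₁ ≤ M and let V = {e₁,…,e_{2l}} ⊂ ℝˡ, where (eᵢ)_j = δ_{ij} for i ≤ l and eᵢ = −e_{2l−i+1} for i > l. Let Y₁,…,Y_k be i.i.d. random vectors with P(Yᵢ = e_j) = |λ_j|/M for j = 1,…,2l and P(Yᵢ = 0⃗) = 1 − Σ_{j=1}^{2l} |λ_j|/M, and set Ȳ_k := (1/k)·Σ_{i=1}^k Yᵢ. Then E[ d(M·Ȳ_k, M·E Y₁)² ] ≤ 4·n·A²·M² / k. -/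
open MeasureTheory ProbabilityTheory Real ENNReal

/-! Every `Yᵢ` lies in the unit `ℓ¹`-ball, hence so do `Ȳ_k` and `E Y₁`, and the contraction
hypothesis bounds `d(M Ȳ_k, M E Y₁)²` by `n A² M² ‖Ȳ_k − E Y₁‖₂²`. The `Yᵢ` take values in the
finite set `V ∪ {0}` with the same point masses, so they all have mean `E Y₁`; by independence each
coordinate of `Ȳ_k` has variance `k⁻²` times the sum of the variances of the corresponding
coordinates of the `Yᵢ`, whence `E ‖Ȳ_k − E Y₁‖₂² ≤ k⁻² Σᵢ E ‖Yᵢ‖₂² ≤ 1 / k`. -/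

def signedBasisVector (l : ℕ) (i : Fin (2 * l)) (j : Fin l) : ℝ :=
  if (i : ℕ) < l then (if (i : ℕ) = (j : ℕ) then 1 else 0)
  else (if 2 * l - 1 - (i : ℕ) = (j : ℕ) then -1 else 0)

theorem sum_abs_ite_val_eq_le_one {l : ℕ} (c : ℕ) {a : ℝ} (ha : |a| ≤ 1) :
    ∑ j : Fin l, |if c = (j : ℕ) then a else 0| ≤ 1 := by
  by_cases hc : c < l
  · rw [Finset.sum_eq_single_of_mem ⟨c, hc⟩ (Finset.mem_univ _) fun j _ hj => ?_]
    · simpa using ha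
    · rw [if_neg fun h => hj (Fin.ext h.symm), abs_zero]
  · rw [Finset.sum_eq_zero fun j _ => ?_]
    · exact zero_le_one
    · rw [if_neg (by omega), abs_zero]

theorem sum_abs_signedBasisVector_le_one {l : ℕ} (i : Fin (2 * l)) :
    ∑ j, |signedBasisVector l i j| ≤ 1 := by
  unfold signedBasisVector
  split_ifs
  · exact sum_abs_ite_val_eq_le_one _ (by simp)
  · exact sum_abs_ite_val_eq_le_one _ (by simp)

section UnitBall

variable {ι : Type*} [Fintype ι]

theorem sum_sq_le_one_of_sum_abs_le_one {u : ι → ℝ} (hu : ∑ j, |u j| ≤ 1) :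
    ∑ j, u j ^ 2 ≤ 1 :=
  calc ∑ j, u j ^ 2 = ∑ j, |u j| ^ 2 := by simp_rw [sq_abs]
    _ ≤ (∑ j, |u j|) ^ 2 := Finset.sum_sq_le_sq_sum_of_nonneg fun j _ => abs_nonneg _
    _ ≤ 1 := pow_le_one₀ (Finset.sum_nonneg fun j _ => abs_nonneg _) hu

theorem sum_abs_const_mul_le {c : ℝ} (hc : 0 ≤ c) {u : ι → ℝ} (hu : ∑ j, |u j| ≤ 1) :
    ∑ j, |c * u j| ≤ c := by
  simp_rw [abs_mul, abs_of_nonneg hc, ← Finset.mul_sum]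
  exact mul_le_of_le_one_right hc hu

theorem sum_abs_average_le_one {k : ℕ} {f : Fin k → ι → ℝ} (hf : ∀ i, ∑ j, |f i j| ≤ 1) :
    ∑ j, |(1 / (k : ℝ)) * ∑ i, f i j| ≤ 1 :=
  calc ∑ j, |(1 / (k : ℝ)) * ∑ i, f i j| ≤ ∑ j, (1 / (k : ℝ)) * ∑ i, |f i j| := by
        gcongr with j
        rw [abs_mul, abs_of_nonneg (by positivity)]
        gcongr
        exact Finset.abs_sum_le_sum_abs _ _
    _ = (1 / (k : ℝ)) * ∑ i, ∑ j, |f i j| := by rw [← Finset.mul_sum, Finset.sum_comm]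
    _ ≤ (1 / (k : ℝ)) * ∑ _i : Fin k, 1 := by gcongr with i; exact hf i
    _ ≤ 1 := by
        rcases k.eq_zero_or_pos with rfl | hk
        · simp
        · simp [hk.ne']

variable {Ω : Type*} [MeasurableSpace Ω] {μ : Measure Ω} {Y : Ω → ι → ℝ}

theorem memLp_apply_of_sum_abs_le_one [IsFiniteMeasure μ] (hY : Measurable Y)
    (h : ∀ ω, ∑ j, |Y ω j| ≤ 1) (j : ι) (p : ℝ≥0∞) : MemLp (fun ω => Y ω j) p μ :=
  MemLp.of_bound ((measurable_pi_apply j).comp hY).aestronglyMeasurable 1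
    (ae_of_all _ fun ω => (Finset.single_le_sum (f := fun j => |Y ω j|)
      (fun _ _ => abs_nonneg _) (Finset.mem_univ j)).trans (h ω))

variable [IsProbabilityMeasure μ]

theorem sum_abs_integral_le_one (hY : Measurable Y) (h : ∀ ω, ∑ j, |Y ω j| ≤ 1) :
    ∑ j, |∫ ω, Y ω j ∂μ| ≤ 1 := by
  have hint (j : ι) : Integrable (fun ω => |Y ω j|) μ :=
    ((memLp_apply_of_sum_abs_le_one hY h j 1).integrable le_rfl).abs
  calc ∑ j, |∫ ω, Y ω j ∂μ| ≤ ∑ j, ∫ ω, |Y ω j| ∂μ := by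
        gcongr with j
        exact abs_integral_le_integral_abs
    _ = ∫ ω, ∑ j, |Y ω j| ∂μ := (integral_finsetSum _ fun j _ => hint j).symm
    _ ≤ 1 := by
        simpa using integral_mono (integrable_finsetSum _ fun j _ => hint j)
          (integrable_const 1) h

theorem integral_sum_sq_le_one_of_sum_abs_le_one (hY : Measurable Y)
    (h : ∀ ω, ∑ j, |Y ω j| ≤ 1) : ∫ ω, ∑ j, Y ω j ^ 2 ∂μ ≤ 1 := by
  simpa using integral_mono (integrable_finsetSum _ fun j _ =>
      (memLp_apply_of_sum_abs_le_one (μ := μ) hY h j 2).integrable_sq)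
    (integrable_const 1) fun ω => sum_sq_le_one_of_sum_abs_le_one (h ω)

end UnitBall

theorem sq_sqrt_sum_sq_sub_le {𝔛 : Type*} {n l : ℕ} (x : Fin n → 𝔛)
    (φ : (Fin l → ℝ) → 𝔛 → ℝ) {M A : ℝ} (hM : 0 ≤ M)
    (hcontr : ∀ θ θ' : Fin l → ℝ, (∑ j, |θ j|) ≤ M → (∑ j, |θ' j|) ≤ M →
      Real.sqrt (∑ i, (φ θ (x i) - φ θ' (x i))^2)
        ≤ Real.sqrt n * A * Real.sqrt (∑ j, (θ j - θ' j)^2))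
    {u v : Fin l → ℝ} (hu : ∑ j, |u j| ≤ 1) (hv : ∑ j, |v j| ≤ 1) :
    (Real.sqrt (∑ i, (φ (fun j => M * u j) (x i) - φ (fun j => M * v j) (x i)) ^ 2)) ^ 2
      ≤ n * A ^ 2 * M ^ 2 * ∑ j, (u j - v j) ^ 2 :=
  calc _ ≤ (Real.sqrt n * A * Real.sqrt (∑ j, (M * u j - M * v j) ^ 2)) ^ 2 :=
        pow_le_pow_left₀ (Real.sqrt_nonneg _)
          (hcontr _ _ (sum_abs_const_mul_le hM hu) (sum_abs_const_mul_le hM hv)) 2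
    _ = n * A ^ 2 * M ^ 2 * ∑ j, (u j - v j) ^ 2 := by
        rw [mul_pow, mul_pow, Real.sq_sqrt n.cast_nonneg, Real.sq_sqrt (by positivity)]
        simp_rw [← mul_sub, mul_pow, ← Finset.mul_sum]
        ring

section FiniteRange

variable {Ω α : Type*} [MeasurableSpace Ω] {μ : Measure Ω} [IsFiniteMeasure μ]
  [MeasurableSpace α] [MeasurableSingletonClass α] {X X' : Ω → α} {S : Finset α}

theorem integral_comp_eq_sum_of_forall_mem (hX : Measurable X) (hS : ∀ ω, X ω ∈ S)
    (g : α → ℝ) : ∫ ω, g (X ω) ∂μ = ∑ v ∈ S, μ.real (X ⁻¹' {v}) * g v := by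
  have hsum : (fun ω => g (X ω)) =
      fun ω => ∑ v ∈ S, (X ⁻¹' {v}).indicator (fun _ => g v) ω := by
    funext ω
    rw [Finset.sum_eq_single_of_mem (X ω) (hS ω) fun v _ hv => ?_]
    · simp
    · simp [Ne.symm hv]
  rw [hsum, integral_finsetSum _ fun v _ =>
    (integrable_const (g v)).indicator (hX (measurableSet_singleton v))]
  refine Finset.sum_congr rfl fun v _ => ?_
  rw [integral_indicator_const _ (hX (measurableSet_singleton v)), smul_eq_mul]

theorem integral_comp_eq_of_measure_preimage_singleton_eq (hX : Measurable X)
    (hX' : Measurable X') (hS : ∀ ω, X ω ∈ S) (hS' : ∀ ω, X' ω ∈ S)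
    (h : ∀ v ∈ S, μ (X ⁻¹' {v}) = μ (X' ⁻¹' {v})) (g : α → ℝ) :
    ∫ ω, g (X ω) ∂μ = ∫ ω, g (X' ω) ∂μ := by
  rw [integral_comp_eq_sum_of_forall_mem hX hS, integral_comp_eq_sum_of_forall_mem hX' hS']
  exact Finset.sum_congr rfl fun v hv => by rw [measureReal_def, measureReal_def, h v hv]

end FiniteRange

section EmpiricalMean

variable {Ω : Type*} [MeasurableSpace Ω] {μ : Measure Ω} {k : ℕ}

theorem memLp_two_average_sub [IsFiniteMeasure μ] {Z : Fin k → Ω → ℝ}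
    (hZ : ∀ i, MemLp (Z i) 2 μ) (m : ℝ) :
    MemLp (fun ω => (1 / (k : ℝ)) * ∑ i, Z i ω - m) 2 μ :=
  ((memLp_finsetSum _ fun i _ => hZ i).const_mul _).sub (memLp_const m)

theorem integral_sq_average_sub_le [IsProbabilityMeasure μ] (hk : 0 < k)
    {Z : Fin k → Ω → ℝ} (hZ : ∀ i, MemLp (Z i) 2 μ)
    (hind : Pairwise fun i i' => IndepFun (Z i) (Z i') μ) {m : ℝ}
    (hm : ∀ i, ∫ ω, Z i ω ∂μ = m) :
    ∫ ω, ((1 / (k : ℝ)) * ∑ i, Z i ω - m) ^ 2 ∂μ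
      ≤ (1 / (k : ℝ)) ^ 2 * ∑ i, ∫ ω, Z i ω ^ 2 ∂μ := by
  set Zbar := fun ω => (1 / (k : ℝ)) * ∑ i, Z i ω
  have hmean : ∫ ω, Zbar ω ∂μ = m := by
    simp only [Zbar, integral_const_mul,
      integral_finsetSum _ fun i _ => (hZ i).integrable one_le_two, hm, Finset.sum_const,
      Finset.card_univ, Fintype.card_fin, nsmul_eq_mul]
    field_simp
  have hvar : variance Zbar μ = (1 / (k : ℝ)) ^ 2 * ∑ i, variance (Z i) μ := by
    rw [variance_const_mul, ← IndepFun.variance_sum (fun i _ => hZ i) fun i _ i' _ h => hind h]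
    congr 2
    ext ω
    simp
  calc ∫ ω, (Zbar ω - m) ^ 2 ∂μ = variance Zbar μ := by
        rw [variance_eq_integral, hmean]
        exact ((memLp_finsetSum _ fun i _ => hZ i).const_mul _).1.aemeasurable
    _ ≤ _ := by
      rw [hvar]
      gcongr with i
      exact variance_le_expectation_sq (hZ i).1

theorem integral_sum_sq_average_sub_le {ι : Type*} [Fintype ι] [IsProbabilityMeasure μ]
    (hk : 0 < k) {Y : Fin k → Ω → ι → ℝ} (hY : ∀ i j, MemLp (fun ω => Y i ω j) 2 μ)
    (hind : iIndepFun Y μ) {m : ι → ℝ} (hm : ∀ i j, ∫ ω, Y i ω j ∂μ = m j) {B : ℝ}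
    (hB : ∀ i, ∫ ω, ∑ j, Y i ω j ^ 2 ∂μ ≤ B) :
    ∫ ω, ∑ j, ((1 / (k : ℝ)) * ∑ i, Y i ω j - m j) ^ 2 ∂μ ≤ B / k := by
  rw [integral_finsetSum _ fun j _ =>
    (memLp_two_average_sub (fun i => hY i j) (m j)).integrable_sq]
  calc ∑ j, ∫ ω, ((1 / (k : ℝ)) * ∑ i, Y i ω j - m j) ^ 2 ∂μ
      ≤ ∑ j, (1 / (k : ℝ)) ^ 2 * ∑ i, ∫ ω, Y i ω j ^ 2 ∂μ := by
        gcongr with j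
        exact integral_sq_average_sub_le hk (fun i => hY i j)
          (fun i i' h => (hind.indepFun h).comp (measurable_pi_apply j) (measurable_pi_apply j))
          (fun i => hm i j)
    _ = (1 / (k : ℝ)) ^ 2 * ∑ i, ∫ ω, ∑ j, Y i ω j ^ 2 ∂μ := by
        rw [← Finset.mul_sum, Finset.sum_comm]
        simp_rw [integral_finsetSum _ fun j _ => (hY _ j).integrable_sq]
    _ ≤ (1 / (k : ℝ)) ^ 2 * ∑ _i : Fin k, B := by gcongr with i; exact hB i
    _ = B / k := by
        simp only [Finset.sum_const, Finset.card_univ, Fintype.card_fin, nsmul_eq_mul]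
        field_simp

end EmpiricalMean

theorem mean_squared_distance_empirical_mean_general
    (n l : ℕ) (M : ℝ) (hM : 0 < M)
    (𝔛 : Type*) (x : Fin n → 𝔛) (φ : (Fin l → ℝ) → 𝔛 → ℝ)
    (A : ℝ)
    (hcontr : ∀ θ θ' : Fin l → ℝ, (∑ j, |θ j|) ≤ M → (∑ j, |θ' j|) ≤ M →
      Real.sqrt (∑ i, (φ θ (x i) - φ θ' (x i))^2)
        ≤ Real.sqrt n * A * Real.sqrt (∑ j, (θ j - θ' j)^2))
    (lam : Fin (2 * l) → ℝ)
    (e : Fin (2 * l) → Fin l → ℝ)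
    (he : ∀ (i : Fin (2 * l)) (j : Fin l),
      e i j = if (i : ℕ) < l then (if (i : ℕ) = (j : ℕ) then 1 else 0)
              else (if 2 * l - 1 - (i : ℕ) = (j : ℕ) then -1 else 0))
    (k : ℕ) (hk : 0 < k)
    (Ω : Type*) (mΩ : MeasurableSpace Ω) (μ : Measure Ω) (hμ : IsProbabilityMeasure μ)
    (Y : Fin k → Ω → (Fin l → ℝ))
    (hYmeas : ∀ i, Measurable (Y i))
    (hYrange : ∀ i ω, Y i ω = 0 ∨ ∃ j, Y i ω = e j)
    (hYlaw : ∀ (i : Fin k) (j : Fin (2 * l)),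
      μ {ω | Y i ω = e j} = ENNReal.ofReal (|lam j| / M))
    (hYzero : ∀ i : Fin k,
      μ {ω | Y i ω = 0} = ENNReal.ofReal (1 - ∑ j, |lam j| / M))
    (hYindep : iIndepFun Y μ) :
    (∫ ω, (Real.sqrt (∑ i,
        (φ (fun j' => M * ((1 / (k : ℝ)) * ∑ i' : Fin k, Y i' ω j')) (x i)
          - φ (fun j' => M * ∫ ω', Y ⟨0, hk⟩ ω' j' ∂μ) (x i))^2))^2 ∂μ)
      ≤ 4 * n * A^2 * M^2 / k := by
  set m : Fin l → ℝ := fun j => ∫ ω, Y ⟨0, hk⟩ ω j ∂μ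
  have hY1 : ∀ i ω, ∑ j, |Y i ω j| ≤ 1 := fun i ω => by
    rcases hYrange i ω with h | ⟨jj, h⟩
    · simp [h]
    · rw [h, show e jj = signedBasisVector l jj from funext (he jj)]
      exact sum_abs_signedBasisVector_le_one jj
  have hYL2 := fun i => memLp_apply_of_sum_abs_le_one (μ := μ) (hYmeas i) (hY1 i)
  have hYmem : ∀ i ω, Y i ω ∈ insert 0 (Finset.univ.image e) := fun i ω => by
    rcases hYrange i ω with h | ⟨jj, h⟩ <;> simp [h]
  have hlaw : ∀ i, ∀ v ∈ insert 0 (Finset.univ.image e),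
      μ (Y i ⁻¹' {v}) = μ (Y ⟨0, hk⟩ ⁻¹' {v}) := fun i v hv => by
    rcases Finset.mem_insert.mp hv with rfl | hv
    · exact (hYzero i).trans (hYzero _).symm
    · obtain ⟨jj, -, rfl⟩ := Finset.mem_image.mp hv
      exact (hYlaw i jj).trans (hYlaw _ jj).symm
  have hmean : ∀ i j, ∫ ω, Y i ω j ∂μ = m j := fun i j =>
    integral_comp_eq_of_measure_preimage_singleton_eq (hYmeas i) (hYmeas _) (hYmem i)
      (hYmem _) (hlaw i) (fun v => v j)
  calc _ ≤ ∫ ω, n * A ^ 2 * M ^ 2 * ∑ j, ((1 / (k : ℝ)) * ∑ i, Y i ω j - m j) ^ 2 ∂μ :=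
        integral_mono_of_nonneg (ae_of_all _ fun _ => sq_nonneg _)
          ((integrable_finsetSum _ fun j _ =>
            (memLp_two_average_sub (fun i => hYL2 i j 2) (m j)).integrable_sq).const_mul _)
          (ae_of_all _ fun ω => sq_sqrt_sum_sq_sub_le x φ hM.le hcontr
            (sum_abs_average_le_one fun i => hY1 i ω)
            (sum_abs_integral_le_one (hYmeas _) (hY1 _)))
    _ ≤ n * A ^ 2 * M ^ 2 * (1 / k) := by
        rw [integral_const_mul]
        gcongr
        exact integral_sum_sq_average_sub_le hk (fun i j => hYL2 i j 2) hYindep hmean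
          fun i => integral_sum_sq_le_one_of_sum_abs_le_one (hYmeas i) (hY1 i)
    _ ≤ 4 * n * A ^ 2 * M ^ 2 / k := by
        rw [mul_one_div]
        gcongr
        linarith [show (0 : ℝ) ≤ n * A ^ 2 * M ^ 2 by positivity]

/-- The probabilistic covering construction of Section 2.2 (following Carl): for
`Θ = {θ : ‖θ‖₁ ≤ M}` with contraction constant `A`, fixed `λ ∈ ℝ^{2l}` with
`‖λ‖₁ ≤ M`, the vertices `e₁,…,e_{2l}` (`(eᵢ)_j = δ_{ij}` for `i ≤ l`,
`eᵢ = −e_{2l−i+1}` for `i > l`), and i.i.d. random vectors `Y₁,…,Y_k ∈ V ∪ {0}` with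
`P(Yᵢ = e_j) = |λ_j|/M` and `P(Yᵢ = 0) = 1 − Σ_j |λ_j|/M`, the empirical mean
`Ȳ_k = k⁻¹ Σ Yᵢ` satisfies `E[d(M Ȳ_k, M E Y₁)²] ≤ 4 n A² M² / k`. -/
theorem mean_squared_distance_empirical_mean
    (n l : ℕ) (hn : 0 < n) (hl : 0 < l) (M : ℝ) (hM : 0 < M)
    (𝔛 : Type*) (x : Fin n → 𝔛) (φ : (Fin l → ℝ) → 𝔛 → ℝ)
    (A : ℝ) (hA : 0 ≤ A)
    (hcontr : ∀ θ θ' : Fin l → ℝ, (∑ j, |θ j|) ≤ M → (∑ j, |θ' j|) ≤ M →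
      Real.sqrt (∑ i, (φ θ (x i) - φ θ' (x i))^2)
        ≤ Real.sqrt n * A * Real.sqrt (∑ j, (θ j - θ' j)^2))
    (lam : Fin (2 * l) → ℝ) (hlam : (∑ j, |lam j|) ≤ M)
    (e : Fin (2 * l) → Fin l → ℝ)
    (he : ∀ (i : Fin (2 * l)) (j : Fin l),
      e i j = if (i : ℕ) < l then (if (i : ℕ) = (j : ℕ) then 1 else 0)
              else (if 2 * l - 1 - (i : ℕ) = (j : ℕ) then -1 else 0))
    (k : ℕ) (hk : 0 < k)
    (Ω : Type*) (mΩ : MeasurableSpace Ω) (μ : Measure Ω) (hμ : IsProbabilityMeasure μ)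
    (Y : Fin k → Ω → (Fin l → ℝ))
    (hYmeas : ∀ i, Measurable (Y i))
    (hYrange : ∀ i ω, Y i ω = 0 ∨ ∃ j, Y i ω = e j)
    (hYlaw : ∀ (i : Fin k) (j : Fin (2 * l)),
      μ {ω | Y i ω = e j} = ENNReal.ofReal (|lam j| / M))
    (hYzero : ∀ i : Fin k,
      μ {ω | Y i ω = 0} = ENNReal.ofReal (1 - ∑ j, |lam j| / M))
    (hYindep : iIndepFun Y μ) :
    (∫ ω, (Real.sqrt (∑ i,
        (φ (fun j' => M * ((1 / (k : ℝ)) * ∑ i' : Fin k, Y i' ω j')) (x i)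
          - φ (fun j' => M * ∫ ω', Y ⟨0, hk⟩ ω' j' ∂μ) (x i))^2))^2 ∂μ)
      ≤ 4 * n * A^2 * M^2 / k :=
  mean_squared_distance_empirical_mean_general n l M hM 𝔛 x φ A hcontr lam e he k hk Ω mΩ μ hμ Y
    hYmeas hYrange hYlaw hYzero hYindep
end
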